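/- arXiv:1804.02075 — 9 statements merged into one kernel-verified Lean document; each statement's English description precedes it below -/
import Mathlib

section
/- For every connected finite simple graph G on n ≥ 2 vertices with maximum degree Δ ≥ 1, every real Γ > 1, and every natural number L, there exists an edge-query strategy of some length T with T ≤ (ln n + L·ln Γ) / ln(1 + (Γ−1)/(Γ·Δ+1)) that finds the target with at most L lies. -/
open Finset

attribute [local instance] Classical.propDecidable

/-- A reply `a` to an edge-query at the edge with endpoints `e.1, e.2` is permitted
if it is one of the two endpoints. -/
def edgePermitted {V : Type*} (e : V × V) (a : V) : Prop :=
  a = e.1 ∨ a = e.2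

/-- A reply `a` to an edge-query at the edge with endpoints `e.1, e.2` is honest for the
target `t` if `a` is an endpoint at distance to `t` not larger than the other endpoint's. -/
def edgeHonest {V : Type*} (G : SimpleGraph V) (t : V) (e : V × V) (a : V) : Prop :=
  (a = e.1 ∧ G.dist e.1 t ≤ G.dist e.2 t) ∨ (a = e.2 ∧ G.dist e.2 t ≤ G.dist e.1 t)

/-- The adaptive deterministic edge-query strategy given by the query map `σ` (always returning
a pair of adjacent vertices, i.e. an edge of `G`) and output map `o` finds the target in `T`
edge queries with at most `L` lies: for every target `t` and every sequence of replies, each an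
endpoint of the corresponding queried edge, containing at most `L` lies with respect to `t`,
the output is `t`. -/
def edgeWins {V : Type*} (G : SimpleGraph V) (σ : List V → V × V) (o : List V → V)
    (T L : ℕ) : Prop :=
  (∀ h : List V, G.Adj (σ h).1 (σ h).2) ∧
  ∀ (t : V) (a : Fin T → V),
    (∀ i : Fin T, edgePermitted (σ ((List.ofFn a).take i)) (a i)) →
    (Finset.univ.filter
        (fun i : Fin T => ¬ edgeHonest G t (σ ((List.ofFn a).take i)) (a i))).card ≤ L →
    o (List.ofFn a) = t

set_option linter.unusedSectionVars false
set_option linter.unusedVariables false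
set_option linter.unnecessarySeqFocus false

namespace EdgeQ
variable {V : Type*} [Fintype V]

/-- vertices strictly closer to `y` than to `x`. -/
noncomputable def sideOf (G : SimpleGraph V) (x y : V) : Finset V :=
  Finset.univ.filter (fun t => G.dist y t < G.dist x t)

lemma mem_sideOf {G : SimpleGraph V} {x y t : V} :
    t ∈ sideOf G x y ↔ G.dist y t < G.dist x t := by simp [sideOf]

noncomputable def tw (w : V → ℝ) : ℝ := ∑ v, w v

noncomputable def mxv [Nonempty V] (w : V → ℝ) : V :=
  (Finset.exists_max_image Finset.univ w Finset.univ_nonempty).choose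

lemma le_mx [Nonempty V] (w : V → ℝ) (v : V) : w v ≤ w (mxv w) :=
  (Finset.exists_max_image Finset.univ w Finset.univ_nonempty).choose_spec.2 v (mem_univ v)

noncomputable def mx [Nonempty V] (w : V → ℝ) : ℝ := w (mxv w)

noncomputable def rsd [Nonempty V] (w : V → ℝ) : ℝ := tw w - mx w

noncomputable def pot [Nonempty V] (Δ : ℕ) (w : V → ℝ) : ℝ := (rsd w)^Δ * mx w

lemma pair_le_tw (w : V → ℝ) (hw : ∀ v, 0 ≤ w v) {u v : V} (huv : u ≠ v) :
    w u + w v ≤ tw w := by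
  rw [← Finset.sum_pair huv]
  exact Finset.sum_le_sum_of_subset_of_nonneg (Finset.subset_univ _)
    (fun i _ _ => hw i)

lemma single_le_tw (w : V → ℝ) (hw : ∀ v, 0 ≤ w v) (v : V) : w v ≤ tw w :=
  Finset.single_le_sum (fun i _ => hw i) (mem_univ v)

lemma rsd_nonneg [Nonempty V] (w : V → ℝ) (hw : ∀ v, 0 ≤ w v) : 0 ≤ rsd w :=
  sub_nonneg.2 (single_le_tw w hw _)

lemma other_le_rsd [Nonempty V] (w : V → ℝ) (hw : ∀ v, 0 ≤ w v) {v : V}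
    (hv : v ≠ mxv w) : w v ≤ rsd w := by
  have := pair_le_tw w hw hv
  unfold rsd mx; linarith

lemma rsd_pos [Nonempty V] (w : V → ℝ) (hw : ∀ v, 0 < w v)
    (hn : 2 ≤ Fintype.card V) : 0 < rsd w := by
  have : Nontrivial V := Fintype.one_lt_card_iff_nontrivial.mp hn
  obtain ⟨v, hv⟩ := exists_ne (mxv w)
  exact lt_of_lt_of_le (hw v) (other_le_rsd w (fun u => (hw u).le) hv)

/-- the lie set: targets for which reply `a` to query `e` is a lie. -/
noncomputable def lieFor (G : SimpleGraph V) (e : V × V) (a : V) : Finset V :=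
  if a = e.1 then sideOf G e.1 e.2 else if a = e.2 then sideOf G e.2 e.1 else ∅

lemma mem_lieFor_iff {G : SimpleGraph V} {e : V × V} (he : G.Adj e.1 e.2) {a : V}
    (ha : edgePermitted e a) (t : V) :
    t ∈ lieFor G e a ↔ ¬ edgeHonest G t e a := by
  have hne : e.1 ≠ e.2 := he.ne
  rcases ha with h | h
  · subst h
    rw [lieFor, if_pos rfl, mem_sideOf, edgeHonest]
    simp only [hne, false_and, or_false, true_and]
    omega
  · subst h
    rw [lieFor, if_neg (Ne.symm hne), if_pos rfl, mem_sideOf, edgeHonest]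
    simp only [hne.symm, false_and, or_false, false_or, true_and]
    omega

lemma exists_closer_nbr {G : SimpleGraph V} (hG : G.Connected) {x v : V} (h : v ≠ x) :
    ∃ y, G.Adj x y ∧ G.dist y v < G.dist x v := by
  obtain ⟨p, hp⟩ := hG.exists_walk_length_eq_dist x v
  cases p with
  | nil => exact absurd rfl h
  | cons hadj p' =>
    refine ⟨_, hadj, ?_⟩
    have hd := SimpleGraph.dist_le p'
    simp [SimpleGraph.Walk.length_cons] at hp
    omega

/-- averaging: some neighbour's strict side carries a `1/Δ` fraction of all weight off `x`. -/
lemma exists_good_nbr {G : SimpleGraph V} [DecidableRel G.Adj] (hG : G.Connected)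
    (hn : 2 ≤ Fintype.card V) (w : V → ℝ) (hw : ∀ v, 0 ≤ w v) (x : V) :
    ∃ y, G.Adj x y ∧
      tw w - w x ≤ (G.maxDegree : ℝ) * ∑ v ∈ sideOf G x y, w v := by
  classical
  have : Nontrivial V := Fintype.one_lt_card_iff_nontrivial.mp hn
  have hne : (G.neighborFinset x).Nonempty := by
    obtain ⟨u, hu⟩ := exists_ne x
    obtain ⟨y, hy, _⟩ := exists_closer_nbr hG hu
    exact ⟨y, (G.mem_neighborFinset x y).mpr hy⟩
  have cover : ∀ v ∈ Finset.univ.erase x,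
      w v ≤ ∑ y ∈ G.neighborFinset x, (if v ∈ sideOf G x y then w v else 0) := by
    intro v hv
    obtain ⟨y, hy1, hy2⟩ := exists_closer_nbr hG (Finset.ne_of_mem_erase hv)
    have hy : y ∈ G.neighborFinset x := (G.mem_neighborFinset x y).mpr hy1
    have : (if v ∈ sideOf G x y then w v else 0) = w v := by
      simp [mem_sideOf.2 hy2]
    calc w v = _ := this.symm
    _ ≤ _ := Finset.single_le_sum (f := fun y => if v ∈ sideOf G x y then w v else 0)
        (fun i _ => by by_cases h : v ∈ sideOf G x i <;> simp [h, hw v]) hy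
  have sum1 : ∑ v ∈ Finset.univ.erase x, w v
      ≤ ∑ y ∈ G.neighborFinset x, ∑ v ∈ sideOf G x y, w v := by
    calc ∑ v ∈ Finset.univ.erase x, w v
        ≤ ∑ v ∈ Finset.univ.erase x, ∑ y ∈ G.neighborFinset x,
            (if v ∈ sideOf G x y then w v else 0) :=
          Finset.sum_le_sum cover
      _ ≤ ∑ v, ∑ y ∈ G.neighborFinset x, (if v ∈ sideOf G x y then w v else 0) :=
          Finset.sum_le_sum_of_subset_of_nonneg (Finset.subset_univ _)
            (fun i _ _ => Finset.sum_nonneg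
              (fun j _ => by by_cases h : i ∈ sideOf G x j <;> simp [h, hw i]))
      _ = ∑ y ∈ G.neighborFinset x, ∑ v, (if v ∈ sideOf G x y then w v else 0) :=
          Finset.sum_comm
      _ = ∑ y ∈ G.neighborFinset x, ∑ v ∈ sideOf G x y, w v := by
          refine Finset.sum_congr rfl (fun y _ => ?_)
          rw [Finset.sum_ite_mem, Finset.univ_inter]
  obtain ⟨y, hy, hymax⟩ := Finset.exists_max_image (G.neighborFinset x)
    (fun y => ∑ v ∈ sideOf G x y, w v) hne
  refine ⟨y, (G.mem_neighborFinset x y).mp hy, ?_⟩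
  have h0 : 0 ≤ ∑ v ∈ sideOf G x y, w v := Finset.sum_nonneg (fun i _ => hw i)
  have hcard : ((G.neighborFinset x).card : ℝ) ≤ (G.maxDegree : ℝ) := by
    have h := G.degree_le_maxDegree x
    rw [SimpleGraph.degree] at h
    exact_mod_cast h
  have sum2 : ∑ y' ∈ G.neighborFinset x, ∑ v ∈ sideOf G x y', w v
      ≤ ((G.neighborFinset x).card : ℝ) * ∑ v ∈ sideOf G x y, w v := by
    have := Finset.sum_le_card_nsmul (G.neighborFinset x)
      (fun y' => ∑ v ∈ sideOf G x y', w v)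
      (∑ v ∈ sideOf G x y, w v) (fun i hi => hymax i hi)
    simpa [nsmul_eq_mul] using this
  have sum3 : tw w - w x ≤ ∑ v ∈ Finset.univ.erase x, w v := by
    have : ∑ v ∈ Finset.univ.erase x, w v + w x = tw w :=
      Finset.sum_erase_add _ _ (mem_univ x)
    linarith
  nlinarith [mul_le_mul_of_nonneg_right hcard h0]

noncomputable def med [Nonempty V] (G : SimpleGraph V) (w : V → ℝ) : V :=
  (Finset.exists_min_image Finset.univ
    (fun x => ∑ v, w v * (G.dist x v : ℝ)) Finset.univ_nonempty).choose

lemma med_min [Nonempty V] (G : SimpleGraph V) (w : V → ℝ) (y : V) :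
    ∑ v, w v * (G.dist (med G w) v : ℝ) ≤ ∑ v, w v * (G.dist y v : ℝ) :=
  (Finset.exists_min_image Finset.univ
    (fun x => ∑ v, w v * (G.dist x v : ℝ)) Finset.univ_nonempty).choose_spec.2 y (mem_univ y)

/-- the median's side is at least as heavy as the other side, for any neighbour. -/
lemma med_side [Nonempty V] {G : SimpleGraph V} (hG : G.Connected) (w : V → ℝ)
    (hw : ∀ v, 0 ≤ w v) {y : V} (hadj : G.Adj (med G w) y) :
    ∑ v ∈ sideOf G (med G w) y, w v ≤ ∑ v ∈ sideOf G y (med G w), w v := by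
  set x := med G w with hx
  have hmin := med_min G w y
  rw [← hx] at hmin
  have hd1 : G.dist y x = 1 := by
    rw [SimpleGraph.dist_eq_one_iff_adj]
    exact hadj.symm
  have key : ∀ v, w v * ((G.dist y v : ℝ) - (G.dist x v : ℝ)) ≤
      (if v ∈ sideOf G y x then w v else 0) - (if v ∈ sideOf G x y then w v else 0) := by
    intro v
    by_cases h1 : v ∈ sideOf G x y
    · have h1' := mem_sideOf.1 h1
      have h2 : v ∉ sideOf G y x := by
        simp [mem_sideOf]; omega
      simp only [h1, if_pos, h2, if_neg, if_false]
      have : (G.dist y v : ℝ) - (G.dist x v : ℝ) ≤ -1 := by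
        have : (G.dist y v : ℝ) + 1 ≤ (G.dist x v : ℝ) := by exact_mod_cast h1'
        linarith
      nlinarith [hw v]
    · by_cases h2 : v ∈ sideOf G y x
      · have h2' := mem_sideOf.1 h2
        simp only [h1, h2, if_pos, if_neg, if_false]
        have htri : G.dist y v ≤ G.dist y x + G.dist x v := hG.dist_triangle
        have : (G.dist y v : ℝ) - (G.dist x v : ℝ) ≤ 1 := by
          rw [hd1] at htri
          have : (G.dist y v : ℝ) ≤ 1 + (G.dist x v : ℝ) := by exact_mod_cast htri
          linarith
        nlinarith [hw v]
      · have e1 := mem_sideOf.not.1 h1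
        have e2 := mem_sideOf.not.1 h2
        simp only [h1, h2, if_neg, if_false]
        have : G.dist y v = G.dist x v := by omega
        rw [this]
        simp
  have hsum : 0 ≤ ∑ v, w v * ((G.dist y v : ℝ) - (G.dist x v : ℝ)) := by
    have : ∑ v, w v * ((G.dist y v : ℝ) - (G.dist x v : ℝ))
        = ∑ v, w v * (G.dist y v : ℝ) - ∑ v, w v * (G.dist x v : ℝ) := by
      rw [← Finset.sum_sub_distrib]
      exact Finset.sum_congr rfl (fun v _ => by ring)
    rw [this]
    linarith
  have hsum2 : ∑ v, w v * ((G.dist y v : ℝ) - (G.dist x v : ℝ)) ≤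
      ∑ v ∈ sideOf G y x, w v - ∑ v ∈ sideOf G x y, w v := by
    calc ∑ v, w v * ((G.dist y v : ℝ) - (G.dist x v : ℝ))
        ≤ ∑ v, ((if v ∈ sideOf G y x then w v else 0)
            - (if v ∈ sideOf G x y then w v else 0)) :=
          Finset.sum_le_sum (fun v _ => key v)
      _ = ∑ v ∈ sideOf G y x, w v - ∑ v ∈ sideOf G x y, w v := by
          rw [Finset.sum_sub_distrib, Finset.sum_ite_mem, Finset.sum_ite_mem,
            Finset.univ_inter, Finset.univ_inter]
  linarith

/-- weighted AM-GM: `x^Δ * y ≤ ((Δ*x+y)/(Δ+1))^(Δ+1)` in the form we need. -/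
lemma amgm_pow (Δ : ℕ) (x y c : ℝ) (hx : 0 ≤ x) (hy : 0 ≤ y) (hc : 0 ≤ c)
    (h : (Δ : ℝ) * x + y ≤ ((Δ : ℝ) + 1) * c) : x ^ Δ * y ≤ c ^ (Δ + 1) := by
  have hD1 : (0:ℝ) < (Δ : ℝ) + 1 := by positivity
  have hw1 : (0:ℝ) ≤ (Δ : ℝ) / ((Δ:ℝ) + 1) := by positivity
  have hw2 : (0:ℝ) ≤ 1 / ((Δ:ℝ) + 1) := by positivity
  have hsum : (Δ : ℝ) / ((Δ:ℝ) + 1) + 1 / ((Δ:ℝ) + 1) = 1 := by field_simp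
  have hgm := Real.geom_mean_le_arith_mean2_weighted hw1 hw2 hx hy hsum
  have hrhs : (Δ : ℝ) / ((Δ:ℝ) + 1) * x + 1 / ((Δ:ℝ) + 1) * y ≤ c := by
    rw [div_mul_eq_mul_div, div_mul_eq_mul_div, ← add_div, div_le_iff₀ hD1]
    linarith
  have hgm2 : x ^ ((Δ : ℝ) / ((Δ:ℝ) + 1)) * y ^ ((1:ℝ) / ((Δ:ℝ) + 1)) ≤ c :=
    le_trans hgm hrhs
  have hbase : 0 ≤ x ^ ((Δ : ℝ) / ((Δ:ℝ) + 1)) * y ^ ((1:ℝ) / ((Δ:ℝ) + 1)) := by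
    positivity
  have hpow := pow_le_pow_left₀ hbase hgm2 (Δ + 1)
  calc x ^ Δ * y
      = (x ^ ((Δ : ℝ) / ((Δ:ℝ) + 1)) * y ^ ((1:ℝ) / ((Δ:ℝ) + 1))) ^ (Δ + 1) := by
        rw [mul_pow, ← Real.rpow_natCast (x ^ ((Δ : ℝ) / ((Δ:ℝ) + 1))) (Δ+1),
          ← Real.rpow_natCast (y ^ ((1:ℝ) / ((Δ:ℝ) + 1))) (Δ+1),
          ← Real.rpow_mul hx, ← Real.rpow_mul hy]
        push_cast
        rw [div_mul_cancel₀ _ (ne_of_gt hD1), div_mul_cancel₀ _ (ne_of_gt hD1)]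
        rw [Real.rpow_natCast, Real.rpow_one]
    _ ≤ c ^ (Δ + 1) := hpow

set_option maxHeartbeats 1000000 in
/-- The core potential-drop lemma: if the set `S` of vertices whose weight gets multiplied
by `q` carries at least a `1/Δ` fraction of the residual weight, then the potential
`rsd^Δ * mx` drops by the factor `((Δ+q)/(Δ+1))^(Δ+1)`. -/
lemma pot_drop [Nonempty V] (Δ : ℕ) (hΔ : 1 ≤ Δ) {q : ℝ} (hq0 : 0 < q) (hq1 : q < 1)
    (hn : 2 ≤ Fintype.card V) (w : V → ℝ) (hw : ∀ v, 0 < w v) (S : Finset V)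
    (hS : rsd w ≤ (Δ : ℝ) * ∑ v ∈ S, w v) :
    pot Δ (fun v => if v ∈ S then q * w v else w v)
      ≤ (((Δ : ℝ) + q)/((Δ : ℝ) + 1))^(Δ + 1) * pot Δ w := by
  set w' : V → ℝ := fun v => if v ∈ S then q * w v else w v with hw'def
  set m := mxv w with hm
  set μ := mx w with hμdef
  set R := rsd w with hRdef
  set μ' := mx w' with hμ'def
  set R' := rsd w' with hR'def
  set s := ∑ v ∈ S, w v with hsdef
  have hμ0 : 0 < μ := hw m
  have hR0 : 0 < R := rsd_pos w hw hn
  have hs0 : 0 ≤ s := Finset.sum_nonneg (fun v _ => (hw v).le)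
  have hw'pos : ∀ v, 0 < w' v := by
    intro v; simp only [hw'def]
    by_cases h : v ∈ S
    · simp only [h, if_pos]; exact mul_pos hq0 (hw v)
    · simp only [h, if_neg, if_false]; exact hw v
  have hw'le : ∀ v, w' v ≤ w v := by
    intro v; simp only [hw'def]
    by_cases h : v ∈ S <;> simp [h] <;> nlinarith [hw v]
  have htw' : tw w' = tw w - (1 - q) * s := by
    unfold tw
    have : ∀ v, w' v = w v - (1-q) * (if v ∈ S then w v else 0) := by
      intro v; simp only [hw'def]
      by_cases h : v ∈ S <;> simp [h] <;> ring
    rw [Finset.sum_congr rfl (fun v _ => this v), Finset.sum_sub_distrib]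
    rw [← Finset.mul_sum, Finset.sum_ite_mem, Finset.univ_inter]
  have hμ'le : μ' ≤ μ := le_trans (hw'le _) (le_mx w _)
  have hμ'0 : 0 < μ' := hw'pos _
  have hR'0 : 0 ≤ R' := rsd_nonneg w' (fun v => (hw'pos v).le)
  have hR'eq : R' = tw w - (1-q) * s - μ' := by rw [hR'def]; unfold rsd; rw [htw']
  have hReq : R = tw w - μ := rfl
  have hlin : (Δ : ℝ) * R' * μ + μ' * R ≤ ((Δ : ℝ) + q) * (R * μ) := by
    by_cases hmS : m ∈ S
    · have hμ'ge : q * μ ≤ μ' := by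
        have : w' m = q * w m := by simp [hw'def, hmS]
        calc q * μ = w' m := by rw [this]; rfl
        _ ≤ μ' := le_mx w' m
      have hsμ : μ ≤ s := Finset.single_le_sum (f := w) (fun v _ => (hw v).le) hmS
      by_cases hcase : R ≤ (Δ : ℝ) * μ
      · have h1 : R' ≤ R + q * μ - μ' := by
          have : (1-q) * μ ≤ (1-q) * s := by nlinarith
          linarith [hR'eq, hReq]
        have hint : 0 ≤ (μ' - q * μ) * ((Δ:ℝ) * μ - R) :=
          mul_nonneg (sub_nonneg.2 hμ'ge) (sub_nonneg.2 hcase)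
        nlinarith [mul_le_mul_of_nonneg_right h1 hμ0.le]
      · push_neg at hcase
        have h1 : (Δ:ℝ) * R' ≤ (Δ:ℝ) * (R + μ - μ') - (1-q) * R := by
          have h2 : (1-q) * R ≤ (Δ:ℝ) * ((1-q) * s) := by nlinarith
          have h3 : (Δ:ℝ) * R' = (Δ:ℝ) * (tw w - (1-q) * s - μ') := by rw [hR'eq]
          have h4 : R = tw w - μ := hReq
          nlinarith
        have hint : 0 ≤ (μ - μ') * (R - (Δ:ℝ) * μ) :=
          mul_nonneg (sub_nonneg.2 hμ'le) (sub_nonneg.2 hcase.le)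
        nlinarith [mul_le_mul_of_nonneg_right h1 hμ0.le]
    · have hμ'eq : μ' = μ := by
        refine le_antisymm hμ'le ?_
        have : w' m = w m := by simp [hw'def, hmS]
        calc μ = w' m := by rw [this]; rfl
        _ ≤ μ' := le_mx w' m
      have h1 : (Δ:ℝ) * R' ≤ (Δ:ℝ) * R - (1-q) * R := by
        have h3 : R' = R - (1-q) * s := by rw [hR'eq, hμ'eq, hReq]; ring
        nlinarith
      rw [hμ'eq]
      nlinarith [mul_le_mul_of_nonneg_right h1 hμ0.le]
  have hgoal : R'^Δ * μ' ≤ (((Δ : ℝ) + q)/((Δ : ℝ) + 1))^(Δ+1) * (R^Δ * μ) := by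
    have hc0 : (0:ℝ) ≤ ((Δ : ℝ) + q)/((Δ : ℝ) + 1) := by positivity
    have hx : 0 ≤ R'/R := by positivity
    have hy : 0 ≤ μ'/μ := le_of_lt (by positivity)
    have hlin2 : (Δ : ℝ) * (R'/R) + μ'/μ ≤ ((Δ : ℝ) + 1) * (((Δ : ℝ) + q)/((Δ : ℝ) + 1)) := by
      have hD1 : (0:ℝ) < (Δ:ℝ) + 1 := by positivity
      rw [mul_div_cancel₀ _ (ne_of_gt hD1)]
      rw [← mul_div_assoc, div_add_div _ _ (ne_of_gt hR0) (ne_of_gt hμ0),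
        div_le_iff₀ (by positivity)]
      linarith [hlin]
    have := amgm_pow Δ (R'/R) (μ'/μ) (((Δ : ℝ) + q)/((Δ : ℝ) + 1)) hx hy hc0 hlin2
    have hexp : (R'/R)^Δ * (μ'/μ) * (R^Δ * μ) = R'^Δ * μ' := by
      have e1 : (R'/R)^Δ * (μ'/μ) * (R^Δ * μ) = R'^Δ * (R^Δ / R^Δ) * (μ' * (μ/μ)) := by
        rw [div_pow]; ring
      rw [e1, div_self (pow_ne_zero _ (ne_of_gt hR0)), div_self (ne_of_gt hμ0),
        mul_one, mul_one]
    calc R'^Δ * μ' = (R'/R)^Δ * (μ'/μ) * (R^Δ * μ) := hexp.symm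
      _ ≤ (((Δ : ℝ) + q)/((Δ : ℝ) + 1))^(Δ+1) * (R^Δ * μ) := by
          apply mul_le_mul_of_nonneg_right this
          positivity
  exact hgoal

/-- the one-step lemma : there is an edge query such that any reply shrinks the potential. -/
lemma step_exists [Nonempty V] {G : SimpleGraph V} [DecidableRel G.Adj] (hG : G.Connected)
    (hn : 2 ≤ Fintype.card V) (hΔ : 1 ≤ G.maxDegree) {q : ℝ} (hq0 : 0 < q) (hq1 : q < 1)
    (w : V → ℝ) (hw : ∀ v, 0 < w v) :
    ∃ e : V × V, G.Adj e.1 e.2 ∧ ∀ a, edgePermitted e a →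
      pot G.maxDegree (fun v => if v ∈ lieFor G e a then q * w v else w v)
        ≤ (((G.maxDegree : ℝ) + q)/((G.maxDegree : ℝ) + 1))^(G.maxDegree + 1)
            * pot G.maxDegree w := by
  classical
  set x := med G w with hx
  obtain ⟨y, hadj, hy⟩ := exists_good_nbr hG hn w (fun v => (hw v).le) x
  have hxy : x ≠ y := hadj.ne
  have hside1 : rsd w ≤ (G.maxDegree : ℝ) * ∑ v ∈ sideOf G x y, w v := by
    have : rsd w ≤ tw w - w x := by
      have := le_mx w x
      unfold rsd mx
      linarith
    linarith
  have hside2 : rsd w ≤ (G.maxDegree : ℝ) * ∑ v ∈ sideOf G y x, w v := by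
    have hms := med_side hG w (fun v => (hw v).le) (hx ▸ hadj)
    rw [← hx] at hms
    have hΔ0 : (0:ℝ) ≤ (G.maxDegree : ℝ) := by positivity
    nlinarith
  refine ⟨(x, y), hadj, ?_⟩
  intro a ha
  rcases ha with h | h
  · have hS : lieFor G (x, y) a = sideOf G x y := by
      rw [lieFor, if_pos h]
    rw [hS]
    exact pot_drop G.maxDegree hΔ hq0 hq1 hn w hw _ hside1
  · have hS : lieFor G (x, y) a = sideOf G y x := by
      have hne : a ≠ (x, y).1 := by rw [h]; exact Ne.symm hxy
      rw [lieFor, if_neg hne, if_pos h]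
    rw [hS]
    exact pot_drop G.maxDegree hΔ hq0 hq1 hn w hw _ hside2

/-- the rate identity -/
lemma rate_eq {Γ : ℝ} (hΓ : 1 < Γ) (D : ℝ) (hD : 1 ≤ D) :
    1 + (Γ - 1) / (Γ * D + 1) = (D + 1) / (D + Γ⁻¹) := by
  have h1 : (0:ℝ) < Γ := by linarith
  have h2 : (0:ℝ) < Γ * D + 1 := by nlinarith
  have h3 : (0:ℝ) < D + Γ⁻¹ := by positivity
  field_simp
  ring

lemma crux {Δ : ℕ} (hΔ : 1 ≤ Δ) {q N : ℝ} (hq0 : 0 < q) (hq1 : q < 1)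
    (hN : ((Δ:ℝ) + 1) ≤ N) (hN2 : 2 ≤ N) :
    ((Δ:ℝ) + 1) * Real.log (((Δ:ℝ) + 1) / ((Δ:ℝ) + q)) + (Δ:ℝ) * Real.log (N - 1)
      ≤ ((Δ:ℝ) + 1) * Real.log N := by
  have hD0 : (1:ℝ) ≤ (Δ:ℝ) := by exact_mod_cast hΔ
  set D := (Δ:ℝ)
  have hDq : 0 < D + q := by linarith
  have hD1 : 0 < D + 1 := by linarith
  have hN1 : (1:ℝ) ≤ N - 1 := by linarith
  have hpow1 : (N - 1)^Δ * 1 ≤ ((D * (N-1) + 1)/(D+1)) ^ (Δ + 1) := by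
    apply amgm_pow Δ (N-1) 1 _ (by linarith) zero_le_one (by positivity)
    rw [mul_div_cancel₀ _ (ne_of_gt hD1)]
  have hstep : ((D+1)/(D+q))^(Δ+1) * ((D * (N-1) + 1)/(D+1))^(Δ+1)
      = ((D * (N-1) + 1)/(D+q))^(Δ+1) := by
    rw [← mul_pow]
    congr 1
    field_simp
  have hlast : ((D * (N-1) + 1)/(D+q))^(Δ+1) ≤ N^(Δ+1) := by
    apply pow_le_pow_left₀ (by positivity)
    rw [div_le_iff₀ hDq]
    nlinarith
  have hfull : ((D+1)/(D+q))^(Δ+1) * (N - 1)^Δ ≤ N^(Δ+1) := by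
    calc ((D+1)/(D+q))^(Δ+1) * (N - 1)^Δ
        = ((D+1)/(D+q))^(Δ+1) * ((N - 1)^Δ * 1) := by ring
      _ ≤ ((D+1)/(D+q))^(Δ+1) * ((D * (N-1) + 1)/(D+1)) ^ (Δ + 1) := by
          apply mul_le_mul_of_nonneg_left hpow1 (by positivity)
      _ = ((D * (N-1) + 1)/(D+q))^(Δ+1) := hstep
      _ ≤ N^(Δ+1) := hlast
  have hL : Real.log (((D+1)/(D+q))^(Δ+1) * (N - 1)^Δ) ≤ Real.log (N^(Δ+1)) :=
    Real.log_le_log (by positivity) hfull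
  rw [Real.log_mul (by positivity) (by positivity), Real.log_pow, Real.log_pow,
    Real.log_pow] at hL
  push_cast at hL ⊢
  linarith

/-- the full numeric statement used in the endgame. -/
lemma final_numeric {Δ n L : ℕ} (hΔ : 1 ≤ Δ) (hn : 2 ≤ n) (hΔn : Δ + 1 ≤ n)
    {Γ : ℝ} (hΓ : 1 < Γ) :
    (↑(⌊(Real.log n + L * Real.log Γ) / Real.log (1 + (Γ - 1) / (Γ * Δ + 1))⌋₊) : ℝ)
      ≤ (Real.log n + L * Real.log Γ) / Real.log (1 + (Γ - 1) / (Γ * Δ + 1)) ∧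
    (((Δ:ℝ) + Γ⁻¹)/((Δ:ℝ) + 1))^((Δ+1) * ⌊(Real.log n + L * Real.log Γ) /
        Real.log (1 + (Γ - 1) / (Γ * Δ + 1))⌋₊) * ((n:ℝ) - 1)^Δ
      < ((Γ⁻¹)^L)^Δ * (Γ⁻¹)^L := by
  have hD0 : (1:ℝ) ≤ (Δ:ℝ) := by exact_mod_cast hΔ
  set D := (Δ:ℝ) with hD
  have hq0 : (0:ℝ) < Γ⁻¹ := by positivity
  have hq1 : Γ⁻¹ < 1 := by
    rw [inv_lt_one_iff₀]; right; exact hΓ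
  set q := Γ⁻¹ with hqdef
  have hN2 : (2:ℝ) ≤ (n:ℝ) := by exact_mod_cast hn
  have hDN : D + 1 ≤ (n:ℝ) := by rw [hD]; exact_mod_cast hΔn
  have hrate := rate_eq hΓ D hD0
  have hρgt : 1 < (D + 1)/(D + q) := by
    rw [lt_div_iff₀ (by linarith)]; linarith
  have hlr : 0 < Real.log ((D+1)/(D+q)) := Real.log_pos hρgt
  set lr := Real.log ((D+1)/(D+q)) with hlrdef
  have hlogN : 0 < Real.log n := Real.log_pos (by linarith)
  have hlogΓ : 0 < Real.log Γ := Real.log_pos hΓ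
  set B := (Real.log n + L * Real.log Γ) / Real.log (1 + (Γ - 1) / (Γ * D + 1)) with hBdef
  have hBeq : B = (Real.log n + L * Real.log Γ) / lr := by rw [hBdef, hrate]
  have hB0 : 0 ≤ B := by
    rw [hBeq]
    positivity
  constructor
  · exact Nat.floor_le hB0
  · have hT : B - 1 < (⌊B⌋₊ : ℝ) := by
      have := Nat.lt_floor_add_one B
      linarith
    set T := ⌊B⌋₊
    have hBlr : B * lr = Real.log n + L * Real.log Γ := by
      rw [hBeq, div_mul_cancel₀ _ (ne_of_gt hlr)]
    have hcrux := crux hΔ hq0 hq1 hDN hN2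
    have hmain : D * Real.log ((n:ℝ) - 1) + (D + 1) * (L * Real.log Γ)
        < (D+1) * ((T:ℝ) * lr) := by
      have h1 : (B - 1) * lr < (T:ℝ) * lr := by
        apply mul_lt_mul_of_pos_right hT hlr
      have h2 : (D+1) * ((B-1) * lr) ≤ (D+1) * ((T:ℝ)*lr) := by nlinarith
      have h3 : (D+1) * ((B-1)*lr) = (D+1) * (Real.log n + L * Real.log Γ) - (D+1) * lr := by
        rw [sub_mul, one_mul, mul_sub, hBlr]
      nlinarith
    have hn1 : (0:ℝ) < (n:ℝ) - 1 := by linarith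
    have hlhs_pos : 0 < ((D + q)/(D + 1))^((Δ+1) * T) * ((n:ℝ) - 1)^Δ :=
      mul_pos (pow_pos (div_pos (by linarith) (by linarith)) _) (pow_pos hn1 _)
    have hrhs_pos : 0 < ((q:ℝ)^L)^Δ * q^L := by positivity
    rw [← Real.log_lt_log_iff hlhs_pos hrhs_pos]
    rw [Real.log_mul (ne_of_gt (pow_pos (div_pos (by linarith) (by linarith)) _))
        (ne_of_gt (pow_pos hn1 _)), Real.log_pow, Real.log_pow,
      Real.log_mul (by positivity) (by positivity), Real.log_pow, Real.log_pow]
    have hlogq : Real.log q = - Real.log Γ := by rw [hqdef, Real.log_inv]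
    have hlogρ : Real.log ((D + q)/(D + 1)) = - lr := by
      rw [hlrdef, ← Real.log_inv]
      congr 1
      rw [inv_div]
    rw [hlogq, hlogρ]
    push_cast
    nlinarith [hmain]

section Strategy
variable [Nonempty V] {G : SimpleGraph V} [DecidableRel G.Adj]

lemma exists_edge (hG : G.Connected) (hn : 2 ≤ Fintype.card V) :
    ∃ e : V × V, G.Adj e.1 e.2 := by
  have : Nontrivial V := Fintype.one_lt_card_iff_nontrivial.mp hn
  obtain ⟨u, v, huv⟩ := exists_pair_ne V
  obtain ⟨y, hy, _⟩ := exists_closer_nbr hG (show u ≠ v from huv)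
  exact ⟨(v, y), hy⟩

noncomputable def stepEdge (hG : G.Connected) (hn : 2 ≤ Fintype.card V)
    (hΔ : 1 ≤ G.maxDegree) {q : ℝ} (hq0 : 0 < q) (hq1 : q < 1) (w : V → ℝ) : V × V :=
  if h : ∀ v, 0 < w v then (step_exists hG hn hΔ hq0 hq1 w h).choose
  else (exists_edge hG hn).choose

lemma stepEdge_adj (hG : G.Connected) (hn : 2 ≤ Fintype.card V)
    (hΔ : 1 ≤ G.maxDegree) {q : ℝ} (hq0 : 0 < q) (hq1 : q < 1) (w : V → ℝ) :
    G.Adj (stepEdge hG hn hΔ hq0 hq1 w).1 (stepEdge hG hn hΔ hq0 hq1 w).2 := by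
  unfold stepEdge
  split
  · exact (step_exists hG hn hΔ hq0 hq1 w (by assumption)).choose_spec.1
  · exact (exists_edge hG hn).choose_spec

lemma stepEdge_drop (hG : G.Connected) (hn : 2 ≤ Fintype.card V)
    (hΔ : 1 ≤ G.maxDegree) {q : ℝ} (hq0 : 0 < q) (hq1 : q < 1) (w : V → ℝ)
    (hw : ∀ v, 0 < w v) :
    ∀ a, edgePermitted (stepEdge hG hn hΔ hq0 hq1 w) a →
      pot G.maxDegree (fun v => if v ∈ lieFor G (stepEdge hG hn hΔ hq0 hq1 w) a
          then q * w v else w v)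
        ≤ (((G.maxDegree : ℝ) + q)/((G.maxDegree : ℝ) + 1))^(G.maxDegree + 1)
            * pot G.maxDegree w := by
  unfold stepEdge
  rw [dif_pos hw]
  exact (step_exists hG hn hΔ hq0 hq1 w hw).choose_spec.2

noncomputable def wts (hG : G.Connected) (hn : 2 ≤ Fintype.card V)
    (hΔ : 1 ≤ G.maxDegree) {q : ℝ} (hq0 : 0 < q) (hq1 : q < 1) (h : List V) : V → ℝ :=
  h.foldl (fun w a => fun v =>
    if v ∈ lieFor G (stepEdge hG hn hΔ hq0 hq1 w) a then q * w v else w v) (fun _ => 1)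

variable (hG : G.Connected) (hn : 2 ≤ Fintype.card V) (hΔ : 1 ≤ G.maxDegree)
  {q : ℝ} (hq0 : 0 < q) (hq1 : q < 1)

lemma wts_nil : wts hG hn hΔ hq0 hq1 [] = fun _ => 1 := rfl

lemma wts_concat (h : List V) (a : V) :
    wts hG hn hΔ hq0 hq1 (h ++ [a]) = fun v =>
      if v ∈ lieFor G (stepEdge hG hn hΔ hq0 hq1 (wts hG hn hΔ hq0 hq1 h)) a
        then q * wts hG hn hΔ hq0 hq1 h v else wts hG hn hΔ hq0 hq1 h v := by
  unfold wts
  rw [List.foldl_append]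
  rfl

lemma wts_pos (h : List V) : ∀ v, 0 < wts hG hn hΔ hq0 hq1 h v := by
  unfold wts
  generalize hw0 : (fun _ : V => (1:ℝ)) = w0
  have hpos : ∀ v, 0 < w0 v := by intro v; rw [← hw0]; norm_num
  clear hw0
  induction h generalizing w0 with
  | nil => exact hpos
  | cons a l ih =>
    rw [List.foldl_cons]
    apply ih
    intro v
    split
    · exact mul_pos hq0 (hpos v)
    · exact hpos v

/-- the main winning lemma -/
lemma wins (T L : ℕ)
    (hTnum : (((G.maxDegree:ℝ)+q)/((G.maxDegree:ℝ)+1))^((G.maxDegree+1)*T)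
        * ((Fintype.card V : ℝ)-1)^G.maxDegree < ((q^L)^G.maxDegree) * q^L) :
    edgeWins G (fun h => stepEdge hG hn hΔ hq0 hq1 (wts hG hn hΔ hq0 hq1 h))
      (fun h => mxv (wts hG hn hΔ hq0 hq1 h)) T L := by
  classical
  set Δ := G.maxDegree with hΔdef
  set ρ := (((Δ:ℝ)+q)/((Δ:ℝ)+1)) with hρdef
  set c := ρ^(Δ+1) with hcdef
  constructor
  · intro h
    exact stepEdge_adj hG hn hΔ hq0 hq1 _
  intro t a hperm hlies
  set pre : ℕ → List V := fun i => (List.ofFn a).take i with hpre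
  set wt : ℕ → V → ℝ := fun i => wts hG hn hΔ hq0 hq1 (pre i) with hwt
  have hprefix : ∀ (i : ℕ) (hi : i < T), pre (i+1) = pre i ++ [a ⟨i, hi⟩] := by
    intro i hi
    rw [hpre]
    dsimp only
    rw [List.take_succ]
    congr 1
    rw [List.getElem?_eq_getElem (by simpa using hi)]
    simp [List.getElem_ofFn]
  set P : Fin T → Prop := fun j =>
    ¬ edgeHonest G t (stepEdge hG hn hΔ hq0 hq1 (wt j.1)) (a j) with hP
  have hwtar : ∀ i : ℕ, i ≤ T →
      wt i t = q ^ (Finset.univ.filter (fun j : Fin T => j.1 < i ∧ P j)).card := by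
    intro i
    induction i with
    | zero =>
      intro _
      have : (Finset.univ.filter (fun j : Fin T => j.1 < 0 ∧ P j)) = ∅ := by
        apply Finset.filter_false_of_mem
        intro j _
        simp
      rw [this]
      simp [hwt, hpre, wts_nil]
    | succ i ih =>
      intro hi1
      have hi : i < T := by omega
      have hcard : (Finset.univ.filter (fun j : Fin T => j.1 < i + 1 ∧ P j)).card
          = (Finset.univ.filter (fun j : Fin T => j.1 < i ∧ P j)).card
            + (if P ⟨i, hi⟩ then 1 else 0) := by
        have hsplit : Finset.univ.filter (fun j : Fin T => j.1 < i + 1 ∧ P j)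
            = Finset.univ.filter (fun j : Fin T => (j.1 < i ∧ P j) ∨ (j = ⟨i, hi⟩ ∧ P j)) := by
          apply Finset.filter_congr
          intro j _
          constructor
          · rintro ⟨h1, h2⟩
            rcases Nat.lt_succ_iff_lt_or_eq.mp h1 with h3 | h3
            · exact Or.inl ⟨h3, h2⟩
            · exact Or.inr ⟨Fin.ext h3, h2⟩
          · rintro (⟨h1, h2⟩ | ⟨h1, h2⟩)
            · exact ⟨by omega, h2⟩
            · refine ⟨?_, h2⟩
              rw [h1]
              exact Nat.lt_succ_self i
        rw [hsplit, Finset.filter_or, Finset.card_union_of_disjoint]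
        · congr 1
          by_cases hPi : P ⟨i, hi⟩
          · rw [if_pos hPi]
            have : Finset.univ.filter (fun j : Fin T => j = ⟨i, hi⟩ ∧ P j) = {⟨i, hi⟩} := by
              ext j
              simp only [Finset.mem_filter, Finset.mem_univ, true_and, Finset.mem_singleton]
              constructor
              · exact fun h => h.1
              · intro h; subst h; exact ⟨rfl, hPi⟩
            rw [this, Finset.card_singleton]
          · rw [if_neg hPi]
            have : Finset.univ.filter (fun j : Fin T => j = ⟨i, hi⟩ ∧ P j) = ∅ := by
              apply Finset.filter_false_of_mem
              rintro j _ ⟨h1, h2⟩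
              subst h1
              exact hPi h2
            rw [this, Finset.card_empty]
        · rw [Finset.disjoint_filter]
          rintro j _ ⟨h1, _⟩ ⟨h2, _⟩
          subst h2
          exact absurd h1 (lt_irrefl i)
      rw [hcard]
      have hstep : wt (i+1) t = if t ∈ lieFor G
          (stepEdge hG hn hΔ hq0 hq1 (wt i)) (a ⟨i, hi⟩) then q * wt i t else wt i t := by
        rw [hwt]
        dsimp only
        rw [hprefix i hi, wts_concat]
      have hlie : t ∈ lieFor G (stepEdge hG hn hΔ hq0 hq1 (wt i)) (a ⟨i, hi⟩) ↔ P ⟨i, hi⟩ := by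
        rw [hP]
        exact mem_lieFor_iff (stepEdge_adj hG hn hΔ hq0 hq1 _) (hperm ⟨i, hi⟩) t
      rw [hstep]
      by_cases hPi : P ⟨i, hi⟩
      · rw [if_pos (hlie.mpr hPi), ih (by omega), if_pos hPi, pow_succ]
        ring
      · rw [if_neg (fun hc => hPi (hlie.mp hc)), ih (by omega), if_neg hPi]
        ring
  have hpot : ∀ i : ℕ, i ≤ T → pot Δ (wt i) ≤ c ^ i * pot Δ (wt 0) := by
    intro i
    induction i with
    | zero => intro _; simp
    | succ i ih =>
      intro hi1
      have hi : i < T := by omega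
      have hstep : pot Δ (wt (i+1)) ≤ c * pot Δ (wt i) := by
        have hd := stepEdge_drop hG hn hΔ hq0 hq1 (wt i)
          (wts_pos hG hn hΔ hq0 hq1 _) (a ⟨i, hi⟩) (hperm ⟨i, hi⟩)
        have : wt (i+1) = fun v => if v ∈ lieFor G
            (stepEdge hG hn hΔ hq0 hq1 (wt i)) (a ⟨i, hi⟩) then q * wt i v else wt i v := by
          rw [hwt]
          dsimp only
          rw [hprefix i hi, wts_concat]
        rw [this]
        exact hd
      have hc0 : 0 ≤ c := by
        rw [hcdef]
        apply pow_nonneg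
        rw [hρdef]
        positivity
      calc pot Δ (wt (i+1)) ≤ c * pot Δ (wt i) := hstep
        _ ≤ c * (c ^ i * pot Δ (wt 0)) := by
            apply mul_le_mul_of_nonneg_left (ih (by omega)) hc0
        _ = c ^ (i+1) * pot Δ (wt 0) := by ring
  have hpot0 : pot Δ (wt 0) = ((Fintype.card V : ℝ) - 1)^Δ * 1 := by
    have h1 : wt 0 = fun _ => 1 := rfl
    rw [h1]
    unfold pot rsd tw mx
    simp
  have hfinal : pot Δ (wt T) < ((q^L)^Δ) * q^L := by
    calc pot Δ (wt T) ≤ c ^ T * pot Δ (wt 0) := hpot T le_rfl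
      _ = ρ^((Δ+1)*T) * ((Fintype.card V : ℝ) - 1)^Δ := by
          rw [hpot0, hcdef, ← pow_mul]
          ring
      _ < ((q^L)^Δ) * q^L := hTnum
  have htar : q ^ L ≤ wt T t := by
    have hK : (Finset.univ.filter (fun j : Fin T => j.1 < T ∧ P j)).card ≤ L := by
      have : Finset.univ.filter (fun j : Fin T => j.1 < T ∧ P j)
          = Finset.univ.filter (fun j : Fin T =>
              ¬ edgeHonest G t (stepEdge hG hn hΔ hq0 hq1
                (wts hG hn hΔ hq0 hq1 ((List.ofFn a).take j.1))) (a j)) := by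
        apply Finset.filter_congr
        intro j _
        have : j.1 < T := j.2
        simp only [this, true_and]
        rfl
      rw [this]
      exact hlies
    rw [hwtar T le_rfl]
    exact pow_le_pow_of_le_one hq0.le hq1.le hK
  have hothers : ∀ s : V, s ≠ t → wt T s < q ^ L := by
    intro s hs
    by_contra hcon
    push_neg at hcon
    have hqL : (0:ℝ) < q ^ L := pow_pos hq0 L
    have hwpos := wts_pos hG hn hΔ hq0 hq1 (pre T)
    have hmx : q ^ L ≤ mx (wt T) := le_trans htar (le_mx _ t)
    have hrsd : q ^ L ≤ rsd (wt T) := by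
      by_cases hmt : mxv (wt T) = t
      · refine le_trans hcon (other_le_rsd _ (fun v => (hwpos v).le) ?_)
        rw [hmt]
        exact hs
      · exact le_trans htar (other_le_rsd _ (fun v => (hwpos v).le) (fun hc => hmt (hc ▸ rfl)))
    have : ((q^L)^Δ) * q^L ≤ pot Δ (wt T) := by
      unfold pot
      have h1 : (q^L)^Δ ≤ (rsd (wt T))^Δ := pow_le_pow_left₀ hqL.le hrsd Δ
      exact mul_le_mul h1 hmx hqL.le (pow_nonneg (le_trans hqL.le hrsd) Δ)
    linarith
  have : mxv (wt T) = t := by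
    by_contra hns
    have h1 := hothers (mxv (wt T)) hns
    have h2 : q ^ L ≤ wt T (mxv (wt T)) := le_trans htar (le_mx _ t)
    linarith
  have hTfull : pre T = List.ofFn a := by
    rw [hpre]
    dsimp only
    apply List.take_of_length_le
    simp
  rw [← hTfull]
  exact this

end Strategy
end EdgeQ

theorem edge_queries_fixed_lies {V : Type*} [Fintype V] (G : SimpleGraph V)
    [DecidableRel G.Adj] (hG : G.Connected) (hn : 2 ≤ Fintype.card V)
    (hΔ : 1 ≤ G.maxDegree) (Γ : ℝ) (hΓ : 1 < Γ) (L : ℕ) :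
    ∃ (T : ℕ) (σ : List V → V × V) (o : List V → V),
      (T : ℝ) ≤ (Real.log (Fintype.card V) + L * Real.log Γ)
          / Real.log (1 + (Γ - 1) / (Γ * G.maxDegree + 1)) ∧
      edgeWins G σ o T L := by
  have hNE : Nonempty V := by
    rw [← Fintype.card_pos_iff]
    omega
  have hΔn : G.maxDegree + 1 ≤ Fintype.card V := by
    have := G.maxDegree_lt_card_verts
    omega
  have hq0 : (0:ℝ) < Γ⁻¹ := by positivity
  have hq1 : Γ⁻¹ < 1 := by
    rw [inv_lt_one_iff₀]; right; exact hΓ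
  obtain ⟨hfloor, hnum⟩ := EdgeQ.final_numeric (n := Fintype.card V) (L := L) hΔ hn hΔn hΓ
  exact ⟨_, _, _, hfloor, EdgeQ.wins hG hn hΔ hq0 hq1 _ L hnum⟩
end

section
/- For every connected finite simple graph G on n ≥ 2 vertices with maximum degree Δ ≥ 1 and every real ε with 0 < ε < 1, setting r = (1−ε)/(Δ+1), there exist a natural number T with T ≤ 2·ε⁻²·Δ·ln n and an edge-query strategy of length T that finds the target with at most ⌊r·T⌋ lies. -/
open Finset

attribute [local instance] Classical.propDecidable

section Auxiliary


lemma exp_neg_mu_le (ε : ℝ) (h0 : 0 < ε) (h1 : ε < 1) :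
    Real.exp (-(ε + ε^2/2)) ≤ 1 - ε + ε^3/3 := by
  set μ : ℝ := ε + ε^2/2 with hμ
  have hμ0 : 0 ≤ μ := by positivity
  have hS : 1 + μ + μ^2/2 + μ^3/6 + μ^4/24 ≤ Real.exp μ := by
    have h := Real.sum_le_exp_of_nonneg hμ0 5
    simp [Finset.sum_range_succ, Nat.factorial] at h
    nlinarith [h]
  have hApos : (0:ℝ) < 1 - ε + ε^3/3 := by nlinarith
  have hkey : 1 ≤ (1 - ε + ε^3/3) * (1 + μ + μ^2/2 + μ^3/6 + μ^4/24) := by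
    rw [hμ]; nlinarith [pow_nonneg h0.le 4, pow_nonneg h0.le 5, pow_nonneg h0.le 6,
      pow_nonneg h0.le 7, pow_nonneg h0.le 8, pow_nonneg h0.le 9, pow_nonneg h0.le 10,
      pow_nonneg h0.le 11]
  have h2 : Real.exp (-μ) * Real.exp μ = 1 := by
    rw [← Real.exp_add]; simp
  nlinarith [Real.exp_pos μ, mul_le_mul_of_nonneg_left hS hApos.le]


lemma arith_main (D ε T G : ℝ) (hD : 2 ≤ D) (h0 : 0 < ε) (h1 : ε < 1)
    (hT : 2*(ε^2)⁻¹*D - 1 ≤ T) (hG : ε^2/2 + ε^3/6 ≤ G) : D ≤ T * G := by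
  have he2 : (0:ℝ) < ε^2 := by positivity
  have hTe : 2*D - ε^2 ≤ T * ε^2 := by
    have h := mul_le_mul_of_nonneg_right hT he2.le
    have h' : (2*(ε^2)⁻¹*D - 1) * ε^2 = 2*D - ε^2 := by field_simp
    linarith [h, h'.le, h'.ge]
  have hG0 : (0:ℝ) ≤ G := by nlinarith
  have hT0 : (0:ℝ) ≤ T := by nlinarith
  have h4 : ε^4 ≤ ε^3 := pow_le_pow_of_le_one h0.le h1.le (by norm_num)
  have h5 : ε^5 ≤ ε^3 := pow_le_pow_of_le_one h0.le h1.le (by norm_num)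
  have hDe : 2*ε^3 ≤ D*ε^3 := mul_le_mul_of_nonneg_right hD (by positivity)
  have h2 : (2*D - ε^2) * (ε^2/2 + ε^3/6) ≤ (T * ε^2) * G :=
    mul_le_mul hTe hG (by positivity) (by nlinarith)
  have key : D * ε^2 ≤ (T * G) * ε^2 := by nlinarith [h2]
  nlinarith [key, he2]

lemma log_ge_one {n : ℕ} (hn : 3 ≤ n) : 1 ≤ Real.log n := by
  have h3 : (3:ℝ) ≤ n := by exact_mod_cast hn
  rw [Real.le_log_iff_exp_le (by linarith : (0:ℝ) < n)]
  nlinarith [Real.exp_one_lt_d9]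

lemma step_core (β δ c M M' W W' lw : ℝ)
    (hβ0 : 0 < β) (hβ1 : β < 1) (hδ : δ = 1 - β) (hc0 : 0 < c)
    (hM0 : 0 < M) (hWt0 : 0 < W - M)
    (hW' : W' = W - δ * lw) (hM'leM : M' ≤ M) (hβM : β * M ≤ M')
    (hWtΔ : c * (W - M) ≤ lw) (hlw0 : 0 ≤ lw)
    (hcase : (M' = M ∧ lw ≤ W - M) ∨ M ≤ lw) :
    (W' - M') * M' ^ c ≤ ((W - M) * M ^ c) * Real.exp (-(δ * c)) := by
  have hδ0 : 0 < δ := by rw [hδ]; linarith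
  have hM'0 : 0 < M' := lt_of_lt_of_le (by positivity) hβM
  rcases hcase with ⟨hM'eq, hlw_le⟩ | hMlelw
  · -- Case A
    subst hM'eq
    have h1 : W' - M' ≤ (W - M') * (1 - δ * c) := by
      rw [hW']
      have h2 : δ * (c * (W - M')) ≤ δ * lw := mul_le_mul_of_nonneg_left hWtΔ hδ0.le
      nlinarith
    have h4 : 1 - δ * c ≤ Real.exp (-(δ*c)) := by
      have h6 := Real.add_one_le_exp (-(δ*c))
      linarith
    have h7 : (W - M') * (1 - δ * c) ≤ (W - M') * Real.exp (-(δ*c)) :=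
      mul_le_mul_of_nonneg_left h4 hWt0.le
    have h8 : W' - M' ≤ (W - M') * Real.exp (-(δ*c)) := h1.trans h7
    calc (W' - M') * M' ^ c ≤ ((W - M') * Real.exp (-(δ*c))) * M' ^ c :=
          mul_le_mul_of_nonneg_right h8 (Real.rpow_nonneg hM0.le c)
      _ = (W - M') * M' ^ c * Real.exp (-(δ*c)) := by ring
  · -- Case B
    have hx1 : W' - M' ≤ (W - M) * Real.exp ((-(δ*lw) + (M - M'))/(W - M)) := by
      have hval : W' - M' = (W - M) * (1 + ((-(δ*lw) + (M - M'))/(W - M))) := by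
        rw [hW']; field_simp; ring
      rw [hval]
      apply mul_le_mul_of_nonneg_left _ hWt0.le
      have h6 := Real.add_one_le_exp ((-(δ*lw) + (M - M'))/(W - M))
      linarith
    have hx2 : M' ^ c ≤ M ^ c * Real.exp (c * (M'/M - 1)) := by
      have hM'ratio : M * (M'/M) = M' := by field_simp
      have hratio_nonneg : 0 ≤ M'/M := by positivity
      calc M' ^ c = (M * (M'/M)) ^ c := by rw [hM'ratio]
        _ = M ^ c * (M'/M) ^ c := Real.mul_rpow hM0.le hratio_nonneg
        _ ≤ M ^ c * Real.exp (c * (M'/M - 1)) := by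
            apply mul_le_mul_of_nonneg_left _ (Real.rpow_nonneg hM0.le c)
            have h5 : M'/M ≤ Real.exp (M'/M - 1) := by
              have h6 := Real.add_one_le_exp (M'/M - 1); linarith
            calc (M'/M) ^ c ≤ (Real.exp (M'/M - 1)) ^ c :=
                  Real.rpow_le_rpow hratio_nonneg h5 hc0.le
              _ = Real.exp ((M'/M - 1) * c) := (Real.exp_mul _ _).symm
              _ = Real.exp (c * (M'/M - 1)) := by rw [mul_comm]
    have hE : (-(δ*lw) + (M - M'))/(W - M) + c * (M'/M - 1) ≤ -(δ * c) := by
      have hMM' : 0 ≤ M - M' := by linarith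
      have hMM'2 : M - M' ≤ δ * M := by rw [hδ]; nlinarith
      have hcWt : δ * (c * (W - M)) ≤ δ * lw := mul_le_mul_of_nonneg_left hWtΔ hδ0.le
      have hprod : 0 < (W - M) * M := mul_pos hWt0 hM0
      have expandeq : ((-(δ*lw) + (M - M'))/(W - M) + c * (M'/M - 1) + δ * c) * ((W - M) * M)
          = (-(δ*lw) + (M - M')) * M + c * (M' - M) * (W - M) + δ * c * ((W - M) * M) := by
        field_simp
      have hX : ((-(δ*lw) + (M - M'))/(W - M) + c * (M'/M - 1) + δ * c) * ((W - M) * M) ≤ 0 := by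
        rw [expandeq]
        by_cases hmc : M ≤ c * (W - M)
        · have h6 : (M - M') * (M - c * (W - M)) ≤ 0 :=
            mul_nonpos_of_nonneg_of_nonpos hMM' (by linarith)
          have h9 : δ * (c * (W - M)) * M ≤ δ * lw * M :=
            mul_le_mul_of_nonneg_right hcWt hM0.le
          nlinarith [h6, h9]
        · push_neg at hmc
          have h7 : (M - M') * (M - c * (W - M)) ≤ δ * M * (M - c * (W - M)) :=
            mul_le_mul_of_nonneg_right hMM'2 (by linarith)
          have h8 : δ * M * M ≤ δ * lw * M :=
            mul_le_mul_of_nonneg_right (mul_le_mul_of_nonneg_left hMlelw hδ0.le) hM0.le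
          nlinarith [h7, h8]
      nlinarith [hX, hprod]
    calc (W' - M') * M' ^ c
        ≤ ((W - M) * Real.exp ((-(δ*lw) + (M - M'))/(W - M))) * M' ^ c :=
          mul_le_mul_of_nonneg_right hx1 (Real.rpow_nonneg hM'0.le c)
      _ ≤ ((W - M) * Real.exp ((-(δ*lw) + (M - M'))/(W - M))) * (M ^ c * Real.exp (c * (M'/M - 1))) := by
          apply mul_le_mul_of_nonneg_left hx2 (by positivity)
      _ = ((W - M) * M ^ c) * (Real.exp ((-(δ*lw) + (M - M'))/(W - M)) * Real.exp (c * (M'/M - 1))) := by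
          ring
      _ ≤ ((W - M) * M ^ c) * Real.exp (-(δ * c)) := by
          apply mul_le_mul_of_nonneg_left _ (by positivity)
          rw [← Real.exp_add]
          exact Real.exp_le_exp.2 hE


lemma step_bound {V : Type*} [Fintype V] [Nonempty V]
    (hcard : 2 ≤ Fintype.card V)
    (β : ℝ) (hβ0 : 0 < β) (hβ1 : β < 1) (Δ : ℕ) (hΔ : 1 ≤ Δ)
    (w : V → ℝ) (hw : ∀ t, 0 < w t) (S : Finset V)
    (hS : ((∑ t, w t) - Finset.univ.sup' Finset.univ_nonempty w) / (Δ:ℝ) ≤ ∑ t ∈ S, w t) :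
    ((∑ t, (if t ∈ S then β * w t else w t)) -
        Finset.univ.sup' Finset.univ_nonempty (fun t => if t ∈ S then β * w t else w t)) *
      (Finset.univ.sup' Finset.univ_nonempty (fun t => if t ∈ S then β * w t else w t)) ^ ((Δ:ℝ)⁻¹)
    ≤ (((∑ t, w t) - Finset.univ.sup' Finset.univ_nonempty w) *
        (Finset.univ.sup' Finset.univ_nonempty w) ^ ((Δ:ℝ)⁻¹)) * Real.exp (-(1-β)/Δ) := by
  classical
  have hΔR : (0:ℝ) < (Δ:ℝ) := by exact_mod_cast hΔ
  set w' : V → ℝ := fun t => if t ∈ S then β * w t else w t with hw'def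
  set M : ℝ := Finset.univ.sup' Finset.univ_nonempty w with hMdef
  set M' : ℝ := Finset.univ.sup' Finset.univ_nonempty w' with hM'def
  set W : ℝ := ∑ t, w t with hWdef
  set W' : ℝ := ∑ t, w' t with hW'def
  set lw : ℝ := ∑ t ∈ S, w t with hlwdef
  obtain ⟨z, -, hzM0⟩ := Finset.exists_mem_eq_sup' (Finset.univ_nonempty (α := V)) w
  have hzM : M = w z := hMdef.trans hzM0
  have hM0 : 0 < M := by rw [hzM]; exact hw z
  have hWt_erase : W - M = ∑ t ∈ Finset.univ.erase z, w t := by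
    have h := Finset.sum_erase_add Finset.univ w (Finset.mem_univ z)
    rw [hzM, hWdef]; linarith [h]
  have hWt0 : 0 < W - M := by
    rw [hWt_erase]
    obtain ⟨u1, u2, hu⟩ := Fintype.exists_pair_of_one_lt_card (by omega : 1 < Fintype.card V)
    have hy : ∃ y, y ≠ z := by
      by_cases h1 : u1 = z
      · exact ⟨u2, by rw [← h1]; exact hu.symm⟩
      · exact ⟨u1, h1⟩
    obtain ⟨y, hy⟩ := hy
    exact Finset.sum_pos' (fun t _ => (hw t).le)
      ⟨y, Finset.mem_erase.2 ⟨hy, Finset.mem_univ y⟩, hw y⟩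
  have hlw0 : 0 ≤ lw := Finset.sum_nonneg fun t _ => (hw t).le
  have hWtΔ : (Δ:ℝ)⁻¹ * (W - M) ≤ lw := by
    have := hS
    rw [div_eq_mul_inv, mul_comm] at this
    exact this
  have hW'eq : W' = W - (1-β) * lw := by
    have h1 : ∀ t ∈ Finset.univ, w' t = w t - (1-β) * (if t ∈ S then w t else 0) := by
      intro t _
      simp only [hw'def]
      split <;> ring
    rw [hW'def, Finset.sum_congr rfl h1, Finset.sum_sub_distrib, ← Finset.mul_sum]
    congr 1
    rw [Finset.sum_ite_mem, Finset.univ_inter, hlwdef]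
  have hw'le : ∀ t, w' t ≤ w t := by
    intro t
    simp only [hw'def]
    split
    · nlinarith [hw t]
    · exact le_refl _
  have hM'leM : M' ≤ M := by
    rw [hM'def, hMdef]
    apply Finset.sup'_le
    intro t _
    exact (hw'le t).trans (Finset.le_sup' w (Finset.mem_univ t))
  have hβM : β * M ≤ M' := by
    have h1 : β * w z ≤ w' z := by
      simp only [hw'def]
      split
      · exact le_refl _
      · nlinarith [hw z]
    have h2 : w' z ≤ M' := by rw [hM'def]; exact Finset.le_sup' w' (Finset.mem_univ z)
    rw [hzM]; linarith
  have hgoalexp : -(1-β)/(Δ:ℝ) = -((1-β) * (Δ:ℝ)⁻¹) := by ring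
  rw [hgoalexp]
  apply step_core β (1-β) ((Δ:ℝ)⁻¹) M M' W W' lw hβ0 hβ1 rfl (by positivity) hM0 hWt0
    hW'eq hM'leM hβM hWtΔ hlw0
  by_cases hcase : ∃ z0, w z0 = M ∧ z0 ∉ S
  · left
    obtain ⟨z0, hz0M, hz0S⟩ := hcase
    constructor
    · apply le_antisymm hM'leM
      have h3 : w' z0 = w z0 := by simp only [hw'def]; rw [if_neg hz0S]
      have h4 : w' z0 ≤ M' := by rw [hM'def]; exact Finset.le_sup' w' (Finset.mem_univ z0)
      rw [← hz0M, ← h3]; exact h4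
    · have hsub : S ⊆ Finset.univ.erase z0 := by
        intro t ht
        exact Finset.mem_erase.2 ⟨fun h => hz0S (h ▸ ht), Finset.mem_univ t⟩
      have h2 : ∑ t ∈ S, w t ≤ ∑ t ∈ Finset.univ.erase z0, w t :=
        Finset.sum_le_sum_of_subset_of_nonneg hsub (fun t _ _ => (hw t).le)
      have h3 : ∑ t ∈ Finset.univ.erase z0, w t = W - w z0 := by
        have h5 := Finset.sum_erase_add Finset.univ w (Finset.mem_univ z0)
        rw [hWdef]; linarith [h5]
      rw [h3, hz0M] at h2
      exact h2
  · right
    push_neg at hcase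
    have hzS : z ∈ S := hcase z hzM.symm
    rw [hzM, hlwdef]
    exact Finset.single_le_sum (fun t _ => (hw t).le) hzS


lemma exists_adj_of_connected {V : Type*} [Fintype V] (G : SimpleGraph V)
    (hG : G.Connected) (h2 : 2 ≤ Fintype.card V) : ∃ x y, G.Adj x y := by
  obtain ⟨u1, u2, hu⟩ := Fintype.exists_pair_of_one_lt_card (by omega : 1 < Fintype.card V)
  obtain ⟨p⟩ := hG.preconnected u1 u2
  cases p with
  | nil => exact absurd rfl hu
  | cons h q => exact ⟨_, _, h⟩

lemma two_le_maxDegree {V : Type*} [Fintype V] (G : SimpleGraph V) [DecidableRel G.Adj]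
    (hG : G.Connected) (h3 : 3 ≤ Fintype.card V) : 2 ≤ G.maxDegree := by
  classical
  by_contra hlt
  push_neg at hlt
  obtain ⟨x, y, hxy⟩ := exists_adj_of_connected G hG (by omega)
  have hdeg : ∀ v : V, G.degree v ≤ 1 := by
    intro v
    have := G.degree_le_maxDegree v
    omega
  have hN : ∀ v z z' : V, G.Adj v z → G.Adj v z' → z = z' := by
    intro v z z' hz hz'
    have h1 : z ∈ G.neighborFinset v := (G.mem_neighborFinset v z).2 hz
    have h2 : z' ∈ G.neighborFinset v := (G.mem_neighborFinset v z').2 hz'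
    have h3 : (G.neighborFinset v).card ≤ 1 := by
      rw [G.card_neighborFinset_eq_degree v]; exact hdeg v
    exact Finset.card_le_one.1 h3 z h1 z' h2
  have hwalk : ∀ (u z : V) (p : G.Walk u z), (u = x ∨ u = y) → (z = x ∨ z = y) := by
    intro u z p
    induction p with
    | nil => exact id
    | cons h p ih =>
      rename_i u' v' w' 
      intro hu
      apply ih
      rcases hu with hu | hu
      · right
        subst hu
        exact hN u' v' y h hxy
      · left
        subst hu
        exact hN u' v' x h hxy.symm
  have hall : ∀ z : V, z = x ∨ z = y := by
    intro z
    obtain ⟨p⟩ := hG.preconnected x z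
    exact hwalk x z p (Or.inl rfl)
  have hsub : (Finset.univ : Finset V) ⊆ {x, y} := by
    intro z _
    rcases hall z with h | h <;> simp [h]
  have hcard2 : Fintype.card V ≤ 2 := by
    calc Fintype.card V = (Finset.univ : Finset V).card := (Finset.card_univ).symm
      _ ≤ ({x, y} : Finset V).card := Finset.card_le_card hsub
      _ ≤ 2 := Finset.card_insert_le x {y} |>.trans (by simp)
  omega


lemma exists_query {V : Type*} [Fintype V] [Nonempty V] (G : SimpleGraph V)
    [DecidableRel G.Adj] (hG : G.Connected) (hcard : 2 ≤ Fintype.card V)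
    (hΔ : 1 ≤ G.maxDegree) (w : V → ℝ) (hw : ∀ t, 0 < w t) :
    ∃ e : V × V, G.Adj e.1 e.2 ∧
      ((∑ t, w t) - Finset.univ.sup' Finset.univ_nonempty w) / (G.maxDegree : ℝ) ≤
        ∑ t ∈ Finset.univ.filter (fun t => G.dist e.2 t < G.dist e.1 t), w t ∧
      ((∑ t, w t) - Finset.univ.sup' Finset.univ_nonempty w) / (G.maxDegree : ℝ) ≤
        ∑ t ∈ Finset.univ.filter (fun t => G.dist e.1 t < G.dist e.2 t), w t := by
  classical
  set Δ : ℕ := G.maxDegree with hΔdef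
  have hΔR : (0:ℝ) < (Δ:ℝ) := by exact_mod_cast hΔ
  set M : ℝ := Finset.univ.sup' Finset.univ_nonempty w with hMdef
  set W : ℝ := ∑ t, w t with hWdef
  obtain ⟨v, -, hv⟩ := Finset.exists_min_image Finset.univ
    (fun x => ∑ t, w t * (G.dist x t : ℝ)) Finset.univ_nonempty
  have hnbr : ∃ u, G.Adj v u := by
    obtain ⟨u1, u2, hu⟩ := Fintype.exists_pair_of_one_lt_card (by omega : 1 < Fintype.card V)
    have ht0 : ∃ t0, t0 ≠ v := by
      by_cases h1 : u1 = v
      · exact ⟨u2, by rw [← h1]; exact hu.symm⟩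
      · exact ⟨u1, h1⟩
    obtain ⟨t0, ht0⟩ := ht0
    obtain ⟨p⟩ := hG.preconnected v t0
    cases p with
    | nil => exact absurd rfl ht0
    | cons h q => exact ⟨_, h⟩
  obtain ⟨u0, hu0⟩ := hnbr
  have hNne : (G.neighborFinset v).Nonempty := ⟨u0, (G.mem_neighborFinset v u0).2 hu0⟩
  -- covering lemma
  have key1 : (∑ t ∈ Finset.univ.erase v, w t) ≤
      ∑ u ∈ G.neighborFinset v,
        ∑ t ∈ Finset.univ.filter (fun t => G.dist u t < G.dist v t), w t := by
    have hpt : ∀ t ∈ Finset.univ.erase v, w t ≤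
        ∑ u ∈ G.neighborFinset v, (if G.dist u t < G.dist v t then w t else 0) := by
      intro t ht
      have htv : t ≠ v := (Finset.mem_erase.1 ht).1
      obtain ⟨p, hp⟩ := (hG.preconnected v t).exists_walk_length_eq_dist
      cases p with
      | nil => exact absurd rfl htv.symm
      | cons h q =>
        rename_i u
        have hq : G.dist v t = q.length + 1 := by
          rw [← hp]; simp [SimpleGraph.Walk.length_cons]
        have hut : G.dist u t < G.dist v t := by
          have h2 := SimpleGraph.dist_le q
          omega
        have humem : u ∈ G.neighborFinset v := (G.mem_neighborFinset v u).2 h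
        have hterm : (if G.dist u t < G.dist v t then w t else 0) = w t := if_pos hut
        calc w t = (if G.dist u t < G.dist v t then w t else 0) := hterm.symm
          _ ≤ ∑ u' ∈ G.neighborFinset v, (if G.dist u' t < G.dist v t then w t else 0) :=
            Finset.single_le_sum (f := fun u' => if G.dist u' t < G.dist v t then w t else 0)
              (fun i _ => by split
                             · exact (hw t).le
                             · exact le_rfl) humem
    calc (∑ t ∈ Finset.univ.erase v, w t)
        ≤ ∑ t ∈ Finset.univ.erase v,
            ∑ u ∈ G.neighborFinset v, (if G.dist u t < G.dist v t then w t else 0) :=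
          Finset.sum_le_sum hpt
      _ ≤ ∑ t ∈ Finset.univ,
            ∑ u ∈ G.neighborFinset v, (if G.dist u t < G.dist v t then w t else 0) := by
          apply Finset.sum_le_sum_of_subset_of_nonneg (Finset.erase_subset _ _)
          intro t _ _
          apply Finset.sum_nonneg
          intro u _
          split
          · exact (hw t).le
          · exact le_rfl
      _ = ∑ u ∈ G.neighborFinset v,
            ∑ t ∈ Finset.univ, (if G.dist u t < G.dist v t then w t else 0) :=
          Finset.sum_comm
      _ = ∑ u ∈ G.neighborFinset v,
            ∑ t ∈ Finset.univ.filter (fun t => G.dist u t < G.dist v t), w t := by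
          apply Finset.sum_congr rfl
          intro u _
          rw [Finset.sum_filter]
  -- choose the best neighbor
  obtain ⟨us, husmem, husmax⟩ := Finset.exists_max_image (G.neighborFinset v)
    (fun u => ∑ t ∈ Finset.univ.filter (fun t => G.dist u t < G.dist v t), w t) hNne
  have hAnonneg : (0:ℝ) ≤ ∑ t ∈ Finset.univ.filter (fun t => G.dist us t < G.dist v t), w t :=
    Finset.sum_nonneg fun t _ => (hw t).le
  have hcardN : (G.neighborFinset v).card ≤ Δ := by
    rw [G.card_neighborFinset_eq_degree v]
    exact G.degree_le_maxDegree v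
  have key2 : (∑ t ∈ Finset.univ.erase v, w t) ≤
      (Δ:ℝ) * ∑ t ∈ Finset.univ.filter (fun t => G.dist us t < G.dist v t), w t := by
    calc (∑ t ∈ Finset.univ.erase v, w t)
        ≤ ∑ u ∈ G.neighborFinset v,
            ∑ t ∈ Finset.univ.filter (fun t => G.dist u t < G.dist v t), w t := key1
      _ ≤ ∑ u ∈ G.neighborFinset v,
            ∑ t ∈ Finset.univ.filter (fun t => G.dist us t < G.dist v t), w t :=
          Finset.sum_le_sum fun u hu => husmax u hu
      _ = ((G.neighborFinset v).card : ℝ) *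
            ∑ t ∈ Finset.univ.filter (fun t => G.dist us t < G.dist v t), w t := by
          rw [Finset.sum_const, nsmul_eq_mul]
      _ ≤ (Δ:ℝ) * ∑ t ∈ Finset.univ.filter (fun t => G.dist us t < G.dist v t), w t := by
          apply mul_le_mul_of_nonneg_right _ hAnonneg
          exact_mod_cast hcardN
  -- erase-sum vs W - M
  have hWM : W - M ≤ ∑ t ∈ Finset.univ.erase v, w t := by
    have h5 := Finset.sum_erase_add Finset.univ w (Finset.mem_univ v)
    have hvM : w v ≤ M := by
      rw [hMdef]; exact Finset.le_sup' w (Finset.mem_univ v)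
    rw [hWdef] at *
    linarith [h5]
  have hA : (W - M) / (Δ:ℝ) ≤
      ∑ t ∈ Finset.univ.filter (fun t => G.dist us t < G.dist v t), w t := by
    rw [div_le_iff₀ hΔR]
    calc W - M ≤ ∑ t ∈ Finset.univ.erase v, w t := hWM
      _ ≤ (Δ:ℝ) * ∑ t ∈ Finset.univ.filter (fun t => G.dist us t < G.dist v t), w t := key2
      _ = (∑ t ∈ Finset.univ.filter (fun t => G.dist us t < G.dist v t), w t) * (Δ:ℝ) := by ring
  -- median inequality : B-side at least A-side
  have hadj_us : G.Adj v us := (G.mem_neighborFinset v us).1 husmem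
  have hd1 : ∀ t, G.dist us t ≤ G.dist v t + 1 := by
    intro t
    have h1 : G.dist us t ≤ G.dist us v + G.dist v t := hG.dist_triangle
    have h2 : G.dist us v ≤ 1 := by
      have := SimpleGraph.dist_le (SimpleGraph.Walk.cons hadj_us.symm SimpleGraph.Walk.nil)
      simpa using this
    omega
  have hd2 : ∀ t, G.dist v t ≤ G.dist us t + 1 := by
    intro t
    have h1 : G.dist v t ≤ G.dist v us + G.dist us t := hG.dist_triangle
    have h2 : G.dist v us ≤ 1 := by
      have := SimpleGraph.dist_le (SimpleGraph.Walk.cons hadj_us SimpleGraph.Walk.nil)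
      simpa using this
    omega
  have hptwise : ∀ t ∈ Finset.univ, w t * ((G.dist us t : ℝ) - (G.dist v t : ℝ)) =
      (if G.dist v t < G.dist us t then w t else 0) -
      (if G.dist us t < G.dist v t then w t else 0) := by
    intro t _
    rcases lt_trichotomy (G.dist us t) (G.dist v t) with h | h | h
    · have he : G.dist v t = G.dist us t + 1 := by
        have := hd2 t; omega
      rw [if_neg (by omega), if_pos h, he]
      push_cast
      ring
    · rw [if_neg (by omega), if_neg (by omega), h]
      ring
    · have he : G.dist us t = G.dist v t + 1 := by
        have := hd1 t; omega
      rw [if_pos h, if_neg (by omega), he]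
      push_cast
      ring
  have hmed : (0:ℝ) ≤ ∑ t, w t * ((G.dist us t : ℝ) - (G.dist v t : ℝ)) := by
    have h1 := hv us (Finset.mem_univ us)
    have h2 : ∑ t, w t * ((G.dist us t : ℝ) - (G.dist v t : ℝ)) =
        (∑ t, w t * (G.dist us t : ℝ)) - ∑ t, w t * (G.dist v t : ℝ) := by
      rw [← Finset.sum_sub_distrib]
      apply Finset.sum_congr rfl
      intro t _
      ring
    rw [h2]
    linarith
  have hBA : (∑ t ∈ Finset.univ.filter (fun t => G.dist us t < G.dist v t), w t) ≤
      ∑ t ∈ Finset.univ.filter (fun t => G.dist v t < G.dist us t), w t := by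
    have h3 : ∑ t, w t * ((G.dist us t : ℝ) - (G.dist v t : ℝ)) =
        (∑ t ∈ Finset.univ.filter (fun t => G.dist v t < G.dist us t), w t) -
        (∑ t ∈ Finset.univ.filter (fun t => G.dist us t < G.dist v t), w t) := by
      rw [Finset.sum_congr rfl hptwise, Finset.sum_sub_distrib]
      congr 1 <;> rw [Finset.sum_filter]
    linarith [hmed, h3.symm.le, h3.le]
  exact ⟨(v, us), hadj_us, hA, le_trans hA hBA⟩

noncomputable def countsAux {V : Type*} (G : SimpleGraph V) (q : (V → ℕ) → V × V) :
    List V → (V → ℕ) → (V → ℕ)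
  | [], ℓ => ℓ
  | a :: s, ℓ =>
      countsAux G q s (fun t => ℓ t + if edgeHonest G t (q ℓ) a then 0 else 1)

lemma countsAux_nil {V : Type*} (G : SimpleGraph V) (q : (V → ℕ) → V × V) (ℓ : V → ℕ) :
    countsAux G q [] ℓ = ℓ := rfl

lemma countsAux_cons {V : Type*} (G : SimpleGraph V) (q : (V → ℕ) → V × V) (a : V)
    (s : List V) (ℓ : V → ℕ) :
    countsAux G q (a :: s) ℓ =
      countsAux G q s (fun t => ℓ t + if edgeHonest G t (q ℓ) a then 0 else 1) := rfl

noncomputable def Zpot {V : Type*} [Fintype V] [Nonempty V] (β : ℝ) (Δ : ℕ) (ℓ : V → ℕ) : ℝ :=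
  ((∑ t, β ^ ℓ t) - Finset.univ.sup' Finset.univ_nonempty (fun t => β ^ ℓ t)) *
    (Finset.univ.sup' Finset.univ_nonempty (fun t => β ^ ℓ t)) ^ ((Δ:ℝ)⁻¹)

lemma lieset_eq_left {V : Type*} [Fintype V] (G : SimpleGraph V) (t : V) (e : V × V)
    (hne : e.1 ≠ e.2) :
    (Finset.univ.filter (fun t' => ¬ edgeHonest G t' e e.1)) =
      (Finset.univ.filter (fun t' => G.dist e.2 t' < G.dist e.1 t')) := by
  apply Finset.ext
  intro t'
  simp only [Finset.mem_filter, Finset.mem_univ, true_and, edgeHonest]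
  constructor
  · intro h
    by_contra hc
    push_neg at hc
    exact h (Or.inl hc)
  · intro h hcon
    rcases hcon with h2 | ⟨h1, -⟩
    · omega
    · exact hne h1

lemma lieset_eq_right {V : Type*} [Fintype V] (G : SimpleGraph V) (t : V) (e : V × V)
    (hne : e.1 ≠ e.2) :
    (Finset.univ.filter (fun t' => ¬ edgeHonest G t' e e.2)) =
      (Finset.univ.filter (fun t' => G.dist e.1 t' < G.dist e.2 t')) := by
  apply Finset.ext
  intro t'
  simp only [Finset.mem_filter, Finset.mem_univ, true_and, edgeHonest]
  constructor
  · intro h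
    by_contra hc
    push_neg at hc
    exact h (Or.inr hc)
  · intro h hcon
    rcases hcon with ⟨h1, -⟩ | h2
    · exact hne h1.symm
    · omega

lemma invariant {V : Type*} [Fintype V] [Nonempty V] (G : SimpleGraph V)
    (q : (V → ℕ) → V × V) (β : ℝ) (hβ0 : 0 < β) (hβ1 : β < 1)
    (Δ : ℕ) (hΔ : 1 ≤ Δ) (hcard : 2 ≤ Fintype.card V) (d : V)
    (hq : ∀ ℓ : V → ℕ, G.Adj (q ℓ).1 (q ℓ).2 ∧
      ((∑ t, β ^ ℓ t) - Finset.univ.sup' Finset.univ_nonempty (fun t => β ^ ℓ t)) / (Δ:ℝ) ≤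
        ∑ t ∈ Finset.univ.filter (fun t => G.dist (q ℓ).2 t < G.dist (q ℓ).1 t), β ^ ℓ t ∧
      ((∑ t, β ^ ℓ t) - Finset.univ.sup' Finset.univ_nonempty (fun t => β ^ ℓ t)) / (Δ:ℝ) ≤
        ∑ t ∈ Finset.univ.filter (fun t => G.dist (q ℓ).1 t < G.dist (q ℓ).2 t), β ^ ℓ t) :
    ∀ (l : List V) (ℓ : V → ℕ),
      (∀ i, i < l.length → edgePermitted (q (countsAux G q (l.take i) ℓ)) (l.getD i d)) →
      Zpot β Δ (countsAux G q l ℓ) ≤ Zpot β Δ ℓ * Real.exp (-(1-β)/Δ) ^ l.length := by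
  intro l
  induction l with
  | nil =>
    intro ℓ _
    simp [countsAux]
  | cons a s ih =>
    intro ℓ hperm
    set ℓ' : V → ℕ := fun t => ℓ t + if edgeHonest G t (q ℓ) a then 0 else 1 with hℓ'def
    have hstep : Zpot β Δ ℓ' ≤ Zpot β Δ ℓ * Real.exp (-(1-β)/Δ) := by
      have hperm0 : edgePermitted (q ℓ) a := by
        have := hperm 0 (by simp)
        simpa [countsAux] using this
      have hne : (q ℓ).1 ≠ (q ℓ).2 := (hq ℓ).1.ne
      set S : Finset V := Finset.univ.filter (fun t' => ¬ edgeHonest G t' (q ℓ) a) with hSdef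
      have hfun : (fun t => β ^ ℓ' t) = (fun t => if t ∈ S then β * β ^ ℓ t else β ^ ℓ t) := by
        funext t
        simp only [hℓ'def, hSdef, Finset.mem_filter, Finset.mem_univ, true_and]
        by_cases h : edgeHonest G t (q ℓ) a
        · simp [h]
        · simp [h, pow_succ, mul_comm]
      have hSsum : ((∑ t, β ^ ℓ t) - Finset.univ.sup' Finset.univ_nonempty (fun t => β ^ ℓ t)) / (Δ:ℝ) ≤
          ∑ t ∈ S, β ^ ℓ t := by
        rcases hperm0 with h | h
        · rw [hSdef, h, lieset_eq_left G d (q ℓ) hne]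
          exact (hq ℓ).2.1
        · rw [hSdef, h, lieset_eq_right G d (q ℓ) hne]
          exact (hq ℓ).2.2
      have := step_bound hcard β hβ0 hβ1 Δ hΔ (fun t => β ^ ℓ t)
        (fun t => by positivity) S hSsum
      unfold Zpot
      rw [hfun]
      exact this
    have hperm' : ∀ i, i < s.length →
        edgePermitted (q (countsAux G q (s.take i) ℓ')) (s.getD i d) := by
      intro i hi
      have := hperm (i+1) (by simpa using Nat.succ_lt_succ hi)
      simpa [List.take_succ_cons, countsAux_cons, List.getD_cons_succ] using this
    have hZ' := ih ℓ' hperm'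
    rw [countsAux_cons]
    calc Zpot β Δ (countsAux G q s ℓ')
        ≤ Zpot β Δ ℓ' * Real.exp (-(1-β)/Δ) ^ s.length := hZ'
      _ ≤ (Zpot β Δ ℓ * Real.exp (-(1-β)/Δ)) * Real.exp (-(1-β)/Δ) ^ s.length := by
          apply mul_le_mul_of_nonneg_right hstep (by positivity)
      _ = Zpot β Δ ℓ * Real.exp (-(1-β)/Δ) ^ (s.length + 1) := by ring
      _ = Zpot β Δ ℓ * Real.exp (-(1-β)/Δ) ^ (a :: s).length := by rw [List.length_cons]

-- count formula
lemma count_formula {V : Type*} (G : SimpleGraph V) (q : (V → ℕ) → V × V) (d : V) :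
    ∀ (l : List V) (ℓ : V → ℕ) (t : V),
      countsAux G q l ℓ t = ℓ t + ∑ i ∈ Finset.range l.length,
        (if edgeHonest G t (q (countsAux G q (l.take i) ℓ)) (l.getD i d) then 0 else 1) := by
  intro l
  induction l with
  | nil => intro ℓ t; simp [countsAux_nil]
  | cons a s ih =>
    intro ℓ t
    rw [countsAux_cons, ih]
    rw [List.length_cons, Finset.sum_range_succ']
    have h3 : ∀ i, countsAux G q ((a :: s).take (i+1)) ℓ =
        countsAux G q (s.take i) (fun t => ℓ t + if edgeHonest G t (q ℓ) a then 0 else 1) := by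
      intro i; rw [List.take_succ_cons, countsAux_cons]
    have h5 : countsAux G q ((a :: s).take 0) ℓ = ℓ := by
      rw [List.take_zero, countsAux_nil]
    rw [h5]
    simp only [List.getD_cons_succ, List.getD_cons_zero]
    have h6 : ∀ i ∈ Finset.range s.length,
        (if edgeHonest G t (q (countsAux G q (s.take i) (fun t => ℓ t + if edgeHonest G t (q ℓ) a then 0 else 1))) (s.getD i d) then (0:ℕ) else 1)
        = (if edgeHonest G t (q (countsAux G q ((a :: s).take (i+1)) ℓ)) (s.getD i d) then 0 else 1) := by
      intro i _
      rw [h3 i]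
    rw [Finset.sum_congr rfl h6]
    omega

lemma counts_eq_card {V : Type*} [Fintype V] (G : SimpleGraph V) (q : (V → ℕ) → V × V)
    (d0 : V) (T : ℕ) (a : Fin T → V) (t : V) :
    countsAux G q (List.ofFn a) (fun _ => 0) t
      = (Finset.univ.filter (fun i : Fin T =>
          ¬ edgeHonest G t (q (countsAux G q ((List.ofFn a).take i) (fun _ => 0))) (a i))).card := by
  rw [Finset.card_filter, count_formula G q d0]
  simp only [List.length_ofFn, zero_add]
  rw [← Fin.sum_univ_eq_sum_range (fun i => if edgeHonest G t
      (q (countsAux G q ((List.ofFn a).take i) (fun _ => 0))) ((List.ofFn a).getD i d0)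
      then (0:ℕ) else 1) T]
  apply Finset.sum_congr rfl
  intro i _
  have hget : (List.ofFn a).getD (i:ℕ) d0 = a i := by
    have hlen : (i:ℕ) < (List.ofFn a).length := by simp [i.isLt]
    rw [List.getD_eq_getElem _ _ hlen]
    simp
  rw [hget]
  by_cases h : edgeHonest G t (q (countsAux G q ((List.ofFn a).take (i:ℕ)) (fun _ => 0))) (a i)
  · rw [if_pos h, if_neg (by exact fun hc => hc h)]
  · rw [if_neg h, if_pos h]


end Auxiliary

set_option maxHeartbeats 2000000 in
theorem edge_queries_linearly_bounded {V : Type*} [Fintype V] (G : SimpleGraph V)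
    [DecidableRel G.Adj] (hG : G.Connected) (hn : 2 ≤ Fintype.card V)
    (hΔ : 1 ≤ G.maxDegree) (ε : ℝ) (hε0 : 0 < ε) (hε1 : ε < 1)
    (r : ℝ) (hr : r = (1 - ε) / (G.maxDegree + 1)) :
    ∃ T : ℕ, (T : ℝ) ≤ 2 * (ε ^ 2)⁻¹ * G.maxDegree * Real.log (Fintype.card V) ∧
      ∃ (σ : List V → V × V) (o : List V → V), edgeWins G σ o T ⌊r * T⌋₊ := by
  classical
  have hne : Nonempty V := by
    have h0 : 0 < Fintype.card V := by omega
    exact Fintype.card_pos_iff.1 h0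
  have hΔR1 : (1:ℝ) ≤ (G.maxDegree:ℝ) := by exact_mod_cast hΔ
  have hΔR0 : (0:ℝ) < (G.maxDegree:ℝ) := by linarith
  have hεsq : ε^2 ≤ 1 := by nlinarith
  have hinvsq : (1:ℝ) ≤ (ε^2)⁻¹ := by
    rw [le_inv_comm₀ (by norm_num) (by positivity)]
    simpa using hεsq
  rcases Nat.lt_or_ge (Fintype.card V) 3 with hn2' | hn3
  · -- case n = 2
    have hn2 : Fintype.card V = 2 := by omega
    obtain ⟨x, y, hxy⟩ := exists_adj_of_connected G hG hn
    refine ⟨1, ?_, fun _ => (x, y), fun l => l.getD 0 x, ?_, ?_⟩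
    · -- 1 ≤ 2 ε⁻² Δ log 2
      have hlog2 : (0.6931471803:ℝ) < Real.log 2 := Real.log_two_gt_d9
      have hcast : ((Fintype.card V : ℕ) : ℝ) = 2 := by rw [hn2]; norm_num
      rw [hcast]
      push_cast
      nlinarith [mul_le_mul hinvsq hΔR1 (by linarith) (by linarith : (0:ℝ) ≤ (ε^2)⁻¹)]
    · intro _; exact hxy
    · intro t a hperm hlies
      have hL : ⌊r * ((1:ℕ):ℝ)⌋₊ = 0 := by
        apply Nat.floor_eq_zero.2
        rw [hr]
        push_cast
        rw [mul_one, div_lt_one (by linarith)]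
        linarith
      rw [hL] at hlies
      have hhon : edgeHonest G t (x, y) (a 0) := by
        by_contra hcon
        have hmem : (0 : Fin 1) ∈ Finset.univ.filter
            (fun i : Fin 1 => ¬ edgeHonest G t ((fun _ => (x, y)) ((List.ofFn a).take (i:ℕ))) (a i)) := by
          exact Finset.mem_filter.2 ⟨Finset.mem_univ _, hcon⟩
        have hc1 := Finset.card_pos.2 ⟨_, hmem⟩
        omega
      have huniv : ∀ v : V, v = x ∨ v = y := by
        intro v
        have hxy' : x ≠ y := G.ne_of_adj hxy
        have hpair : ({x, y} : Finset V) = Finset.univ := by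
          apply Finset.eq_univ_of_card
          rw [Finset.card_pair hxy', hn2]
        have : v ∈ ({x, y} : Finset V) := by rw [hpair]; exact Finset.mem_univ v
        simpa using this
      have hofn : List.ofFn a = [a 0] := by
        simp [List.ofFn_succ]
      have hdyx : G.dist y x ≠ 0 := by
        intro h0
        exact G.ne_of_adj hxy (hG.dist_eq_zero_iff.1 h0).symm
      have hdxy : G.dist x y ≠ 0 := by
        intro h0
        exact G.ne_of_adj hxy (hG.dist_eq_zero_iff.1 h0)
      rw [hofn]
      simp only [List.getD_cons_zero]
      rcases huniv t with ht | ht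
      · rcases hhon with ⟨h1, -⟩ | ⟨-, h2⟩
        · rw [ht]; exact h1
        · exfalso
          rw [ht, SimpleGraph.dist_self] at h2
          simp only at h2
          exact hdyx (Nat.le_zero.1 h2)
      · rcases hhon with ⟨-, h1⟩ | ⟨h2, -⟩
        · exfalso
          rw [ht, SimpleGraph.dist_self] at h1
          simp only at h1
          exact hdxy (Nat.le_zero.1 h1)
        · rw [ht]; exact h2
  · -- main case : n ≥ 3
    have hΔ2 : 2 ≤ G.maxDegree := two_le_maxDegree G hG hn3
    have hΔR2 : (2:ℝ) ≤ (G.maxDegree:ℝ) := by exact_mod_cast hΔ2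
    set Δ : ℕ := G.maxDegree with hΔdef
    set nn : ℕ := Fintype.card V with hnndef
    have hnR3 : (3:ℝ) ≤ (nn:ℝ) := by exact_mod_cast hn3
    set μ : ℝ := ε + ε^2/2 with hμdef
    have hμ0 : 0 < μ := by positivity
    set β : ℝ := Real.exp (-μ) with hβdef
    have hβ0 : 0 < β := Real.exp_pos _
    have hβ1 : β < 1 := Real.exp_lt_one_iff.2 (by linarith)
    have hqex : ∀ ℓ : V → ℕ, ∃ e : V × V, G.Adj e.1 e.2 ∧
        ((∑ t, β ^ ℓ t) - Finset.univ.sup' Finset.univ_nonempty (fun t => β ^ ℓ t)) / (Δ:ℝ) ≤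
          ∑ t ∈ Finset.univ.filter (fun t => G.dist e.2 t < G.dist e.1 t), β ^ ℓ t ∧
        ((∑ t, β ^ ℓ t) - Finset.univ.sup' Finset.univ_nonempty (fun t => β ^ ℓ t)) / (Δ:ℝ) ≤
          ∑ t ∈ Finset.univ.filter (fun t => G.dist e.1 t < G.dist e.2 t), β ^ ℓ t :=
      fun ℓ => exists_query G hG hn hΔ (fun t => β ^ ℓ t) (fun t => by positivity)
    choose q hq1 hq2 hq3 using hqex
    have hlogn1 : 1 ≤ Real.log nn := log_ge_one hn3
    set T : ℕ := ⌊2 * (ε^2)⁻¹ * (Δ:ℝ) * Real.log nn⌋₊ with hTdef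
    have hTle : (T:ℝ) ≤ 2 * (ε^2)⁻¹ * (Δ:ℝ) * Real.log nn :=
      Nat.floor_le (by positivity)
    set L : ℕ := ⌊r * (T:ℝ)⌋₊ with hLdef
    refine ⟨T, hTle, fun h => q (countsAux G q h (fun _ => 0)),
      fun l => if hex : ∃! t', countsAux G q l (fun _ => 0) t' ≤ L then hex.choose
               else Classical.arbitrary V, ?_, ?_⟩
    · intro h; exact hq1 _
    · intro t a hperm hlies
      set cnt : V → ℕ := countsAux G q (List.ofFn a) (fun _ => 0) with hcntdef
      have hcid : ∀ t' : V, cnt t' = (Finset.univ.filter (fun i : Fin T =>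
          ¬ edgeHonest G t' (q (countsAux G q ((List.ofFn a).take (i:ℕ)) (fun _ => 0))) (a i))).card :=
        fun t' => counts_eq_card G q (Classical.arbitrary V) T a t'
      have hct : cnt t ≤ L := by
        rw [hcid t]
        exact hlies
      -- invariant
      have hperm' : ∀ i, i < (List.ofFn a).length →
          edgePermitted (q (countsAux G q ((List.ofFn a).take i) (fun _ => 0)))
            ((List.ofFn a).getD i (Classical.arbitrary V)) := by
        intro i hi
        have hiT : i < T := by simpa using hi
        have hgd : (List.ofFn a).getD i (Classical.arbitrary V) = a ⟨i, hiT⟩ := by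
          rw [List.getD_eq_getElem _ _ (by simpa using hiT)]
          simp
        rw [hgd]
        exact hperm ⟨i, hiT⟩
      have hinv := invariant G q β hβ0 hβ1 Δ hΔ hn (Classical.arbitrary V)
        (fun ℓ => ⟨hq1 ℓ, hq2 ℓ, hq3 ℓ⟩) (List.ofFn a) (fun _ => 0) hperm'
      rw [List.length_ofFn] at hinv
      have hZ0 : Zpot β Δ (fun _ : V => 0) = (nn:ℝ) - 1 := by
        unfold Zpot
        have h1 : (fun t : V => β ^ (0:ℕ)) = fun _ : V => (1:ℝ) := by
          funext s; norm_num
        rw [h1, Finset.sup'_const, Finset.sum_const, Real.one_rpow, mul_one,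
          nsmul_eq_mul, mul_one, Finset.card_univ]
      rw [hZ0] at hinv
      -- key numeric inequality
      set δ : ℝ := 1 - β with hδdef
      have hδ0 : 0 < δ := by rw [hδdef]; linarith
      set c : ℝ := ((Δ:ℕ):ℝ)⁻¹ with hcdef
      have hc0 : 0 < c := by positivity
      have hGq : ε^2/2 + ε^3/6 ≤ δ - (1-ε)*μ := by
        have hb := exp_neg_mu_le ε hε0 hε1
        rw [hδdef, hβdef, hμdef]
        nlinarith [hb]
      have hkey : (Δ:ℝ) * Real.log nn ≤ (T:ℝ) * (δ - (1-ε)*μ) := by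
        apply arith_main _ ε _ _ _ hε0 hε1 _ hGq
        · calc (2:ℝ) = 2 * 1 := by norm_num
            _ ≤ (Δ:ℝ) * Real.log nn := by
              apply mul_le_mul hΔR2 hlogn1 (by norm_num) (by linarith)
        · have hfl := Nat.lt_floor_add_one (2 * (ε^2)⁻¹ * (Δ:ℝ) * Real.log nn)
          have : 2 * (ε ^ 2)⁻¹ * ((Δ:ℝ) * Real.log nn) = 2 * (ε^2)⁻¹ * (Δ:ℝ) * Real.log nn := by
            ring
          rw [this]
          rw [hTdef]
          linarith
      have hLle : (L:ℝ) ≤ r * T := by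
        apply Nat.floor_le
        rw [hr]
        apply mul_nonneg (div_nonneg (by linarith) (by linarith)) (by positivity)
      have hfinal : μ * L * (1 + c) + Real.log nn ≤ (T:ℝ) * δ / (Δ:ℝ) := by
        have h1 : μ * L * (1 + c) ≤ μ * (r * T) * (1 + c) := by
          apply mul_le_mul_of_nonneg_right _ (by positivity)
          exact mul_le_mul_of_nonneg_left hLle hμ0.le
        have h2 : μ * (r * T) * (1 + c) = (1-ε) * μ * T / (Δ:ℝ) := by
          rw [hr, hcdef]
          have hΔne : (Δ:ℝ) ≠ 0 := ne_of_gt hΔR0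
          have hΔ1ne : (Δ:ℝ) + 1 ≠ 0 := by positivity
          field_simp
        have h3 : Real.log nn ≤ (T:ℝ) * (δ - (1-ε)*μ) / (Δ:ℝ) := by
          rw [le_div_iff₀ hΔR0]
          calc Real.log nn * (Δ:ℝ) = (Δ:ℝ) * Real.log nn := by ring
            _ ≤ (T:ℝ) * (δ - (1-ε)*μ) := hkey
        calc μ * L * (1 + c) + Real.log nn
            ≤ μ * (r * T) * (1 + c) + Real.log nn := by linarith [h1]
          _ = (1-ε) * μ * T / (Δ:ℝ) + Real.log nn := by rw [h2]
          _ ≤ (1-ε) * μ * T / (Δ:ℝ) + (T:ℝ) * (δ - (1-ε)*μ) / (Δ:ℝ) := by linarith [h3]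
          _ = (T:ℝ) * δ / (Δ:ℝ) := by ring
      -- uniqueness
      have huniq : ∀ t' : V, cnt t' ≤ L → t' = t := by
        intro t' hct'
        by_contra hnet
        -- lower bound for Zpot cnt
        obtain ⟨z, -, hzM0⟩ := Finset.exists_mem_eq_sup'
          (Finset.univ_nonempty (α := V)) (fun s => β ^ cnt s)
        have hβL : ∀ s : V, cnt s ≤ L → β ^ L ≤ β ^ cnt s := by
          intro s hs
          exact pow_le_pow_of_le_one hβ0.le hβ1.le hs
        have hβL0 : (0:ℝ) < β ^ L := by positivity
        have hMge : β ^ L ≤ Finset.univ.sup' Finset.univ_nonempty (fun s => β ^ cnt s) := by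
          calc β ^ L ≤ β ^ cnt t := hβL t hct
            _ ≤ _ := Finset.le_sup' (fun s => β ^ cnt s) (Finset.mem_univ t)
        have ht3 : ∃ t3 : V, t3 ≠ z ∧ cnt t3 ≤ L := by
          by_cases hz : t' = z
          · exact ⟨t, fun hc => hnet (hz.trans hc.symm ▸ rfl), hct⟩
          · exact ⟨t', hz, hct'⟩
        obtain ⟨t3, ht3z, ht3L⟩ := ht3
        have hWtge : β ^ L ≤ (∑ s, β ^ cnt s) -
            Finset.univ.sup' Finset.univ_nonempty (fun s => β ^ cnt s) := by
          have herase : (∑ s, β ^ cnt s) -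
              Finset.univ.sup' Finset.univ_nonempty (fun s => β ^ cnt s)
              = ∑ s ∈ Finset.univ.erase z, β ^ cnt s := by
            have h5 : ∑ s ∈ Finset.univ.erase z, β ^ cnt s + β ^ cnt z = ∑ s, β ^ cnt s :=
              Finset.sum_erase_add Finset.univ (fun s => β ^ cnt s) (Finset.mem_univ z)
            rw [hzM0]
            linarith [h5]
          rw [herase]
          calc β ^ L ≤ β ^ cnt t3 := hβL t3 ht3L
            _ ≤ ∑ s ∈ Finset.univ.erase z, β ^ cnt s := by
                apply Finset.single_le_sum (f := fun s => β ^ cnt s)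
                  (fun s _ => by positivity)
                exact Finset.mem_erase.2 ⟨ht3z, Finset.mem_univ t3⟩
        have hlow : (β ^ L) * (β ^ L) ^ c ≤ Zpot β Δ cnt := by
          unfold Zpot
          apply mul_le_mul hWtge (Real.rpow_le_rpow hβL0.le hMge hc0.le)
            (Real.rpow_nonneg hβL0.le c) (by linarith)
        -- rewrite lower bound as exponential
        have e1 : β ^ L = Real.exp ((L:ℝ) * -μ) := by
          rw [hβdef, ← Real.exp_nat_mul]
        have e2 : (β ^ L) ^ c = Real.exp (((L:ℝ) * -μ) * c) := by
          rw [e1, ← Real.exp_mul]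
        have hargs : -(μ * (L:ℝ) * (1 + c)) = ((L:ℝ) * -μ) + ((L:ℝ) * -μ) * c := by ring
        have hlow2 : Real.exp (-(μ * L * (1 + c))) = (β ^ L) * (β ^ L) ^ c := by
          rw [e2, e1, ← Real.exp_add, hargs]
        -- upper bound as exponential
        have hup2 : ((nn:ℝ) - 1) * Real.exp (-(1-β)/(Δ:ℝ)) ^ T
            = ((nn:ℝ) - 1) * Real.exp ((T:ℝ) * (-δ/(Δ:ℝ))) := by
          rw [Real.exp_nat_mul]
        have hchain : Real.exp (-(μ * L * (1 + c))) ≤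
            ((nn:ℝ) - 1) * Real.exp ((T:ℝ) * (-δ/(Δ:ℝ))) := by
          rw [← hup2, hlow2]
          exact le_trans hlow hinv
        -- contradiction via logarithms
        have hnn1 : (0:ℝ) < (nn:ℝ) - 1 := by linarith
        have hlog := Real.log_le_log (Real.exp_pos _) hchain
        rw [Real.log_exp, Real.log_mul (by linarith) (Real.exp_ne_zero _),
          Real.log_exp] at hlog
        have hloglt : Real.log ((nn:ℝ) - 1) < Real.log nn :=
          Real.log_lt_log hnn1 (by linarith)
        have : (T:ℝ) * δ / (Δ:ℝ) - μ * L * (1 + c) ≤ Real.log ((nn:ℝ) - 1) := by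
          have h9 : (T:ℝ) * (-δ/(Δ:ℝ)) = -((T:ℝ) * δ / (Δ:ℝ)) := by ring
          rw [h9] at hlog
          linarith
        linarith
      have hex : ∃! t' : V, cnt t' ≤ L := ⟨t, hct, huniq⟩
      show (if hex : ∃! t' : V, cnt t' ≤ L then hex.choose else Classical.arbitrary V) = t
      rw [dif_pos hex]
      exact huniq hex.choose hex.choose_spec.1
end

section
/- For every connected finite simple graph G on n ≥ 2 vertices with maximum degree Δ ≥ 2, there exists an edge-query strategy of some length T with T ≤ ln(n/Δ)/ln(Δ/(Δ−1)) + Δ that finds the target with 0 lies (i.e., when every reply is honest). -/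
open Finset

attribute [local instance] Classical.propDecidable

/-- One step of the candidate-set size recursion. -/
def natF (D k : ℕ) : ℕ := min (k - 1) (k - (k + (D - 1)) / D)

lemma natF_le (D k : ℕ) : natF D k ≤ k - 1 := min_le_left _ _

/-- Number of steps of the recursion needed to reach `0`. -/
def steps (D : ℕ) : ℕ → ℕ
  | 0 => 0
  | (k+1) => steps D (natF D (k+1)) + 1
  decreasing_by exact Nat.lt_succ_of_le (natF_le D (k+1))

lemma steps_spec (D : ℕ) : ∀ k, (natF D)^[steps D k] k = 0 := by
  intro k
  induction k using Nat.strong_induction_on with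
  | _ k ih =>
    match k with
    | 0 => simp [steps]
    | (k+1) =>
      rw [steps, Function.iterate_succ_apply]
      exact ih _ (Nat.lt_succ_of_le (natF_le D (k+1)))

lemma steps_succ (D k : ℕ) (hk : 1 ≤ k) : steps D k = steps D (natF D k) + 1 := by
  match k, hk with
  | (k+1), _ => rw [steps]

lemma natF_mono (D : ℕ) : Monotone (natF D) := by
  refine monotone_nat_of_le_succ fun k => ?_
  have h1 : (k + 1 + (D - 1)) / D ≤ (k + (D - 1)) / D + 1 := by
    rcases Nat.eq_zero_or_pos D with h | h
    · simp [h]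
    · calc (k + 1 + (D - 1)) / D ≤ (k + (D - 1) + D) / D :=
            Nat.div_le_div_right (by omega)
        _ = (k + (D - 1)) / D + 1 := Nat.add_div_right _ h
  unfold natF
  set a := (k + (D - 1)) / D with ha
  set b := (k + 1 + (D - 1)) / D with hb
  omega

lemma natF_eq (D k : ℕ) (hD : 1 ≤ D) : natF D k = k - (k + (D - 1)) / D := by
  rcases Nat.eq_zero_or_pos k with h | h
  · simp [natF, h]
  · have h1 : 1 ≤ (k + (D - 1)) / D := (Nat.one_le_div_iff (by omega)).mpr (by omega)
    exact min_eq_right (Nat.sub_le_sub_left h1 k)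

lemma natF_small (D k : ℕ) (hD : 1 ≤ D) (h1 : 1 ≤ k) (h2 : k ≤ D) :
    natF D k = k - 1 := by
  have hlo : 1 ≤ (k + (D - 1)) / D := (Nat.one_le_div_iff (by omega)).mpr (by omega)
  have hhi : (k + (D - 1)) / D < 2 := by
    rw [Nat.div_lt_iff_lt_mul (by omega)]
    omega
  rw [natF_eq D k hD]
  omega

lemma steps_small (D : ℕ) (hD : 1 ≤ D) : ∀ k, k ≤ D → steps D k = k := by
  intro k
  induction k with
  | zero => rw [steps]; intro; rfl
  | succ k ih =>
    intro hk
    rw [steps_succ D (k+1) (by omega), natF_small D (k+1) hD (by omega) hk,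
      Nat.add_sub_cancel, ih (by omega)]

lemma natF_lower (D k : ℕ) (hD : 2 ≤ D) (hk : D ≤ k) : D - 1 ≤ natF D k := by
  rw [natF_eq D k (by omega)]
  have h1 : (k + (D - 1)) / D ≤ k - D + 1 := by
    rw [Nat.div_le_iff_le_mul_add_pred (by omega)]
    set s := k - D + 1 with hs
    have hs1 : 1 ≤ s := by omega
    have h2 : D - 1 ≤ (D - 1) * s := Nat.le_mul_of_pos_right _ (by omega)
    have h3 : D * s = (D - 1) * s + s := by
      cases D with
      | zero => omega
      | succ d => rw [Nat.succ_sub_one, Nat.succ_mul]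
    omega
  omega

lemma natF_upper (D k : ℕ) (hD : 2 ≤ D) (hk : 1 ≤ k) :
    (natF D k : ℝ) ≤ (k : ℝ) * ((D : ℝ) - 1) / D := by
  rw [natF_eq D k (by omega)]
  set q := (k + (D - 1)) / D with hq
  have hqk : q ≤ k := by
    rw [hq, Nat.div_le_iff_le_mul_add_pred (by omega)]
    have : k ≤ D * k := Nat.le_mul_of_pos_left _ (by omega)
    omega
  have hDq : k ≤ D * q := by
    have h1 := Nat.div_add_mod (k + (D - 1)) D
    have h2 : (k + (D - 1)) % D < D := Nat.mod_lt _ (by omega)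
    rw [← hq] at h1
    omega
  have hD0 : (0:ℝ) < (D:ℝ) := by positivity
  rw [Nat.cast_sub hqk]
  have hq' : (k : ℝ) / D ≤ (q : ℝ) := by
    rw [div_le_iff₀ hD0]
    have h3 : (k : ℝ) ≤ (D : ℝ) * q := by exact_mod_cast hDq
    linarith [mul_comm (D:ℝ) (q:ℝ)]
  have h4 : (k : ℝ) * ((D:ℝ) - 1) / D = (k:ℝ) - (k:ℝ)/D := by
    field_simp
  rw [h4]
  linarith

lemma steps_le (D : ℕ) (hD : 2 ≤ D) : ∀ k, D - 1 ≤ k →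
    (steps D k : ℝ) ≤ Real.log ((k : ℝ) / ((D : ℝ) - 1)) / Real.log ((D : ℝ) / ((D : ℝ) - 1))
      + ((D : ℝ) - 1) := by
  have hD1 : (1:ℝ) < (D : ℝ) := by exact_mod_cast (by omega : 1 < D)
  have hD1' : (0:ℝ) < (D:ℝ) - 1 := by linarith
  set L := Real.log ((D : ℝ) / ((D : ℝ) - 1)) with hLdef
  have hL : 0 < L := by
    apply Real.log_pos
    rw [lt_div_iff₀ hD1']
    linarith
  intro k
  induction k using Nat.strong_induction_on with
  | _ k ih =>
    intro hk
    by_cases hkD : k ≤ D - 1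
    · have hkeq : k = D - 1 := le_antisymm hkD hk
      subst hkeq
      rw [steps_small D (by omega) _ (by omega)]
      have hcast : ((D - 1 : ℕ) : ℝ) = (D : ℝ) - 1 := by
        rw [Nat.cast_sub (by omega)]; simp
      rw [hcast, div_self (by linarith), Real.log_one, zero_div]
      linarith
    · push_neg at hkD
      have hkD' : D ≤ k := by omega
      have hk1 : 1 ≤ k := by omega
      set k' := natF D k with hk'def
      have hk'lt : k' < k := by
        have := natF_le D k; omega
      have hk'low : D - 1 ≤ k' := natF_lower D k hD hkD'
      have hk'up : (k' : ℝ) ≤ (k : ℝ) * ((D:ℝ) - 1) / D := natF_upper D k hD hk1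
      have hIH := ih k' hk'lt hk'low
      have hk'pos : (0:ℝ) < (k' : ℝ) := by
        have : (1:ℕ) ≤ k' := by omega
        exact_mod_cast this
      have hkpos : (0:ℝ) < (k : ℝ) := by
        have : (1:ℕ) ≤ k := hk1
        exact_mod_cast this
      have hlogk' : Real.log ((k' : ℝ) / ((D:ℝ) - 1)) ≤ Real.log ((k:ℝ)/(D:ℝ)) := by
        apply Real.log_le_log (by positivity)
        calc (k':ℝ)/((D:ℝ)-1) ≤ ((k:ℝ) * ((D:ℝ)-1)/(D:ℝ))/((D:ℝ)-1) := by gcongr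
          _ = (k:ℝ)/(D:ℝ) := by field_simp
      have hLeq : Real.log ((k:ℝ)/(D:ℝ)) = Real.log ((k:ℝ)/((D:ℝ)-1)) - L := by
        rw [hLdef, Real.log_div (ne_of_gt hkpos) (by linarith),
          Real.log_div (ne_of_gt hkpos) (ne_of_gt hD1'),
          Real.log_div (by linarith) (ne_of_gt hD1')]
        ring
      rw [steps_succ D k hk1]
      push_cast
      have h2 : Real.log ((k':ℝ)/((D:ℝ)-1)) / L + 1 ≤ Real.log ((k:ℝ)/((D:ℝ)-1)) / L := by
        rw [div_add' _ _ _ (ne_of_gt hL)]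
        gcongr
        linarith
      linarith


section Graph

variable {V : Type*} [Fintype V] {G : SimpleGraph V}

lemma exists_adj_pair (hG : G.Connected) (hn : 2 ≤ Fintype.card V) :
    ∃ p : V × V, G.Adj p.1 p.2 := by
  obtain ⟨v, w, hvw⟩ := Fintype.exists_pair_of_one_lt_card (show 1 < Fintype.card V by omega)
  obtain ⟨p⟩ := hG.preconnected v w
  cases p with
  | nil => exact absurd rfl hvw
  | cons h q => exact ⟨(_, _), h⟩

lemma exists_down_nbr (hG : G.Connected) {v x : V} (hvx : v ≠ x) :
    ∃ u, G.Adj v u ∧ G.dist u x < G.dist v x := by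
  obtain ⟨p, hp⟩ := (hG.preconnected v x).exists_walk_length_eq_dist
  cases p with
  | nil => exact absurd rfl hvx
  | @cons _ u _ h q =>
    refine ⟨u, h, ?_⟩
    have h1 : G.dist u x ≤ q.length := SimpleGraph.dist_le q
    rw [SimpleGraph.Walk.length_cons] at hp
    omega

lemma exists_goodPair [DecidableRel G.Adj] (hG : G.Connected) (hn : 2 ≤ Fintype.card V)
    (hΔ : 2 ≤ G.maxDegree) (S : Finset V) :
    ∃ p : V × V, G.Adj p.1 p.2 ∧
      (S.card - 1 + (G.maxDegree - 1)) / G.maxDegree ≤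
        (S.filter fun x => G.dist p.2 x < G.dist p.1 x).card ∧
      (S.card - 1 + (G.maxDegree - 1)) / G.maxDegree ≤
        (S.filter fun x => G.dist p.1 x < G.dist p.2 x).card := by
  have hNV : Nonempty V := Fintype.card_pos_iff.mp (by omega)
  set Δ := G.maxDegree with hΔdef
  set c := (S.card - 1 + (Δ - 1)) / Δ with hcdef
  by_cases hS : S.card ≤ 1
  · have hc0 : c = 0 := by
      rw [hcdef]
      apply Nat.div_eq_of_lt
      omega
    obtain ⟨p, hp⟩ := exists_adj_pair hG hn
    exact ⟨p, hp, by rw [hc0]; omega, by rw [hc0]; omega⟩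
  push_neg at hS
  obtain ⟨v, -, hv⟩ := Finset.exists_min_image Finset.univ
    (fun w => ∑ x ∈ S, G.dist w x) ⟨Classical.arbitrary V, mem_univ _⟩
  have hcov : S.erase v ⊆ (G.neighborFinset v).biUnion
      (fun u => S.filter fun x => G.dist u x < G.dist v x) := by
    intro x hx
    obtain ⟨hxv, hxS⟩ := Finset.mem_erase.mp hx
    obtain ⟨u, hu, hlt⟩ := exists_down_nbr hG (Ne.symm hxv)
    exact Finset.mem_biUnion.mpr ⟨u, (G.mem_neighborFinset v u).mpr hu,
      Finset.mem_filter.mpr ⟨hxS, hlt⟩⟩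
  have hsum : S.card - 1 ≤
      ∑ u ∈ G.neighborFinset v, (S.filter fun x => G.dist u x < G.dist v x).card := by
    calc S.card - 1 ≤ (S.erase v).card := Finset.pred_card_le_card_erase
      _ ≤ ((G.neighborFinset v).biUnion
          (fun u => S.filter fun x => G.dist u x < G.dist v x)).card :=
        Finset.card_le_card hcov
      _ ≤ _ := Finset.card_biUnion_le
  have hne : (G.neighborFinset v).Nonempty := by
    rw [Finset.nonempty_iff_ne_empty]
    intro h
    rw [h, Finset.sum_empty] at hsum
    omega
  obtain ⟨u, huN, hmax⟩ := Finset.exists_max_image (G.neighborFinset v)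
    (fun u => (S.filter fun x => G.dist u x < G.dist v x).card) hne
  have hadj : G.Adj v u := (G.mem_neighborFinset v u).mp huN
  set A := S.filter fun x => G.dist u x < G.dist v x with hA
  set B := S.filter fun x => G.dist v x < G.dist u x with hB
  have h1 : S.card - 1 ≤ Δ * A.card := by
    calc S.card - 1 ≤ _ := hsum
      _ ≤ ∑ _u ∈ G.neighborFinset v, A.card := Finset.sum_le_sum (fun u' h => hmax u' h)
      _ = (G.neighborFinset v).card * A.card := by rw [Finset.sum_const, smul_eq_mul]
      _ ≤ Δ * A.card := Nat.mul_le_mul_right _ (G.degree_le_maxDegree v)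
  have hcA : c ≤ A.card := by
    have hΔ0 : 0 < Δ := by omega
    rw [hcdef, Nat.div_le_iff_le_mul_add_pred hΔ0]
    exact Nat.add_le_add_right h1 _
  -- triangle facts
  have hd1 : G.dist u v = 1 := SimpleGraph.dist_eq_one_iff_adj.mpr hadj.symm
  have hd1' : G.dist v u = 1 := SimpleGraph.dist_eq_one_iff_adj.mpr hadj
  have htri1 : ∀ x, G.dist u x ≤ G.dist v x + 1 := by
    intro x
    have := hG.dist_triangle (u := u) (v := v) (w := x)
    omega
  have htri2 : ∀ x, G.dist v x ≤ G.dist u x + 1 := by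
    intro x
    have := hG.dist_triangle (u := v) (v := u) (w := x)
    omega
  have hmed : (∑ x ∈ S, (G.dist v x : ℤ)) ≤ ∑ x ∈ S, (G.dist u x : ℤ) := by
    have := hv u (mem_univ u)
    exact_mod_cast this
  have hpt : ∀ x ∈ S, (G.dist u x : ℤ) - G.dist v x ≤
      (if G.dist v x < G.dist u x then (1:ℤ) else 0)
        - (if G.dist u x < G.dist v x then (1:ℤ) else 0) := by
    intro x _
    have h1 := htri1 x
    have h2 := htri2 x
    split_ifs <;> push_cast <;> omega
  have hAB : (A.card : ℤ) ≤ B.card := by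
    have hs0 : (0:ℤ) ≤ ∑ x ∈ S, ((G.dist u x : ℤ) - G.dist v x) := by
      rw [Finset.sum_sub_distrib]
      omega
    have hs1 : ∑ x ∈ S, ((G.dist u x : ℤ) - G.dist v x) ≤ (B.card : ℤ) - A.card := by
      calc _ ≤ ∑ x ∈ S, ((if G.dist v x < G.dist u x then (1:ℤ) else 0)
            - (if G.dist u x < G.dist v x then (1:ℤ) else 0)) := Finset.sum_le_sum hpt
        _ = (B.card : ℤ) - A.card := by
          rw [Finset.sum_sub_distrib, Finset.sum_boole, Finset.sum_boole, hA, hB]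
    omega
  refine ⟨(v, u), hadj, hcA, ?_⟩
  have : c ≤ B.card := by omega
  exact this

end Graph

section Strategy

variable {V : Type*} [Fintype V]

/-- The candidate-set update: given the current candidate set `S`, the query edge `q S`,
and the reply `x`, keep only vertices at least as close to `x` as to the other endpoint. -/
noncomputable def updF (G : SimpleGraph V) (q : Finset V → V × V) (S : Finset V) (x : V) :
    Finset V :=
  S.filter fun y => G.dist x y ≤ G.dist (if x = (q S).1 then (q S).2 else (q S).1) y

/-- The candidate set after processing a list of replies. -/
noncomputable def SofF (G : SimpleGraph V) (q : Finset V → V × V) (l : List V) : Finset V :=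
  l.foldl (updF G q) Finset.univ

lemma SofF_nil (G : SimpleGraph V) (q : Finset V → V × V) : SofF G q [] = Finset.univ := rfl

lemma SofF_concat (G : SimpleGraph V) (q : Finset V → V × V) (l : List V) (x : V) :
    SofF G q (l ++ [x]) = updF G q (SofF G q l) x := by
  simp [SofF]

lemma updF_eq₁ (G : SimpleGraph V) (q : Finset V → V × V) (S : Finset V) {x : V}
    (h : x = (q S).1) :
    updF G q S x = S.filter fun y => G.dist (q S).1 y ≤ G.dist (q S).2 y := by
  rw [updF, h, if_pos rfl]

lemma updF_eq₂ (G : SimpleGraph V) (q : Finset V → V × V) (S : Finset V) {x : V}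
    (hne : (q S).1 ≠ (q S).2) (h : x = (q S).2) :
    updF G q S x = S.filter fun y => G.dist (q S).2 y ≤ G.dist (q S).1 y := by
  rw [updF, h, if_neg hne.symm]

/-- One step of the strategy: the target stays in the candidate set, and the
candidate-set size decreases according to `natF`. -/
lemma update_step (G : SimpleGraph V) [DecidableRel G.Adj]
    (hΔ : 2 ≤ G.maxDegree)
    (q : Finset V → V × V) (hq1 : ∀ S, G.Adj (q S).1 (q S).2)
    (hq2 : ∀ S : Finset V, (S.card - 1 + (G.maxDegree - 1)) / G.maxDegree ≤
      (S.filter fun y => G.dist (q S).2 y < G.dist (q S).1 y).card)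
    (hq3 : ∀ S : Finset V, (S.card - 1 + (G.maxDegree - 1)) / G.maxDegree ≤
      (S.filter fun y => G.dist (q S).1 y < G.dist (q S).2 y).card)
    (S : Finset V) (t x : V)
    (hperm : x = (q S).1 ∨ x = (q S).2)
    (hhon : edgeHonest G t (q S) x)
    (hmem : t ∈ S) :
    t ∈ updF G q S x ∧ (updF G q S x).card - 1 ≤ natF G.maxDegree (S.card - 1) := by
  have hne : (q S).1 ≠ (q S).2 := (hq1 S).ne
  set c := (S.card - 1 + (G.maxDegree - 1)) / G.maxDegree with hcdef
  have hnatF : natF G.maxDegree (S.card - 1) = min (S.card - 1 - 1) (S.card - 1 - c) := by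
    rw [hcdef]; rfl
  have hc1 : 1 ≤ c ∨ S.card ≤ 1 := by
    by_cases h2 : 2 ≤ S.card
    · left
      rw [hcdef]
      exact (Nat.one_le_div_iff (by omega)).mpr (by omega)
    · right; omega
  rcases hperm with hx | hx
  · subst hx
    have hd : G.dist (q S).1 t ≤ G.dist (q S).2 t := by
      rcases hhon with ⟨-, hd⟩ | ⟨heq, -⟩
      · exact hd
      · exact absurd heq hne
    rw [updF_eq₁ G q S rfl]
    constructor
    · exact Finset.mem_filter.mpr ⟨hmem, hd⟩
    · have hsplit := Finset.card_filter_add_card_filter_not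
        (s := S) (p := fun y => G.dist (q S).1 y ≤ G.dist (q S).2 y)
      have hrem : c ≤ (S.filter fun y => ¬ (G.dist (q S).1 y ≤ G.dist (q S).2 y)).card := by
        have hfe : (S.filter fun y => ¬ (G.dist (q S).1 y ≤ G.dist (q S).2 y)) =
            S.filter fun y => G.dist (q S).2 y < G.dist (q S).1 y := by
          simp only [not_le]
        rw [hfe]
        exact hq2 S
      rw [hnatF]
      omega
  · subst hx
    have hd : G.dist (q S).2 t ≤ G.dist (q S).1 t := by
      rcases hhon with ⟨heq, -⟩ | ⟨-, hd⟩
      · exact absurd heq.symm hne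
      · exact hd
    rw [updF_eq₂ G q S hne rfl]
    constructor
    · exact Finset.mem_filter.mpr ⟨hmem, hd⟩
    · have hsplit := Finset.card_filter_add_card_filter_not
        (s := S) (p := fun y => G.dist (q S).2 y ≤ G.dist (q S).1 y)
      have hrem : c ≤ (S.filter fun y => ¬ (G.dist (q S).2 y ≤ G.dist (q S).1 y)).card := by
        have hfe : (S.filter fun y => ¬ (G.dist (q S).2 y ≤ G.dist (q S).1 y)) =
            S.filter fun y => G.dist (q S).1 y < G.dist (q S).2 y := by
          simp only [not_le]
        rw [hfe]
        exact hq3 S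
      rw [hnatF]
      omega

end Strategy

theorem edge_queries_errorless {V : Type*} [Fintype V] (G : SimpleGraph V)
    [DecidableRel G.Adj] (hG : G.Connected) (hn : 2 ≤ Fintype.card V)
    (hΔ : 2 ≤ G.maxDegree) :
    ∃ (T : ℕ) (σ : List V → V × V) (o : List V → V),
      (T : ℝ) ≤ Real.log (Fintype.card V / G.maxDegree)
          / Real.log (G.maxDegree / (G.maxDegree - 1)) + G.maxDegree ∧
      edgeWins G σ o T 0 := by
  have hNV : Nonempty V := Fintype.card_pos_iff.mp (by omega)
  set n := Fintype.card V with hndef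
  set Δ := G.maxDegree with hΔdef
  have hΔn : Δ + 1 ≤ n := by
    obtain ⟨v, hv⟩ := G.exists_maximal_degree_vertex
    have := G.degree_lt_card_verts v
    omega
  choose q hq1 hq2 hq3 using fun S => exists_goodPair (G := G) hG hn hΔ S
  set T := steps Δ (n - 1) with hTdef
  refine ⟨T, fun h => q (SofF G q h),
    fun h => if hx : (SofF G q h).Nonempty then hx.choose else Classical.arbitrary V,
    ?_, fun h => hq1 (SofF G q h), ?_⟩
  · -- the quantitative bound
    have hD1 : (1:ℝ) < (Δ : ℝ) := by exact_mod_cast (by omega : 1 < Δ)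
    have hD1' : (0:ℝ) < (Δ:ℝ) - 1 := by linarith
    have hnpos : (0:ℝ) < (n : ℝ) := by exact_mod_cast (by omega : 0 < n)
    set L := Real.log ((Δ : ℝ) / ((Δ : ℝ) - 1)) with hLdef
    have hL : 0 < L := by
      apply Real.log_pos
      rw [lt_div_iff₀ hD1']
      linarith
    have h1 : (T : ℝ) ≤ Real.log ((↑(n-1) : ℝ) / ((Δ : ℝ) - 1)) / L + ((Δ : ℝ) - 1) :=
      steps_le Δ hΔ (n - 1) (by omega)
    have hcast : ((n - 1 : ℕ) : ℝ) = (n : ℝ) - 1 := by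
      rw [Nat.cast_sub (by omega)]; simp
    rw [hcast] at h1
    have e1 : Real.log ((n:ℝ)/(Δ:ℝ)) + L = Real.log ((n:ℝ)/((Δ:ℝ)-1)) := by
      rw [hLdef, Real.log_div (ne_of_gt hnpos) (by linarith),
        Real.log_div (ne_of_gt hnpos) (ne_of_gt hD1'),
        Real.log_div (by linarith) (ne_of_gt hD1')]
      ring
    have e2 : Real.log (((n:ℝ) - 1)/((Δ:ℝ)-1)) ≤ Real.log ((n:ℝ)/((Δ:ℝ)-1)) := by
      apply Real.log_le_log
      · have h2 : (2:ℝ) ≤ (n:ℝ) := by exact_mod_cast hn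
        apply div_pos (by linarith) hD1'
      · gcongr
        linarith
    have e3 : Real.log (((n:ℝ) - 1)/((Δ:ℝ)-1)) / L ≤ Real.log ((n:ℝ)/((Δ:ℝ)-1)) / L := by
      gcongr
    have e4 : Real.log ((n:ℝ)/((Δ:ℝ)-1)) / L = Real.log ((n:ℝ)/(Δ:ℝ)) / L + 1 := by
      rw [← e1, add_div, div_self (ne_of_gt hL)]
    linarith
  · -- correctness
    intro t a hperm hlies
    simp only [Nat.le_zero, Finset.card_eq_zero, Finset.filter_eq_empty_iff,
      Finset.mem_univ, not_not, forall_const, true_implies] at hlies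
    have key : ∀ i : ℕ, i ≤ T →
        t ∈ SofF G q ((List.ofFn a).take i) ∧
        (SofF G q ((List.ofFn a).take i)).card - 1 ≤ (natF Δ)^[i] (n - 1) := by
      intro i
      induction i with
      | zero =>
        intro _
        simp only [List.take_zero, SofF_nil, Function.iterate_zero, id]
        exact ⟨Finset.mem_univ t, le_rfl⟩
      | succ i ih =>
        intro hi
        have hlt : i < T := by omega
        obtain ⟨hmem, hcard⟩ := ih (by omega)
        have hgetx : (List.ofFn a)[i]? = some (a ⟨i, hlt⟩) := by
          simp [List.getElem?_ofFn, List.ofFnNthVal, hlt]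
        have htake : (List.ofFn a).take (i+1) = (List.ofFn a).take i ++ [a ⟨i, hlt⟩] := by
          rw [List.take_succ, hgetx]
          rfl
        have hS1 : SofF G q ((List.ofFn a).take (i+1)) =
            updF G q (SofF G q ((List.ofFn a).take i)) (a ⟨i, hlt⟩) := by
          rw [htake, SofF_concat]
        have hperm' : a ⟨i, hlt⟩ = (q (SofF G q ((List.ofFn a).take i))).1 ∨
            a ⟨i, hlt⟩ = (q (SofF G q ((List.ofFn a).take i))).2 := hperm ⟨i, hlt⟩
        have hhon' : edgeHonest G t (q (SofF G q ((List.ofFn a).take i))) (a ⟨i, hlt⟩) :=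
          @hlies ⟨i, hlt⟩
        obtain ⟨hm2, hc2⟩ := update_step G hΔ q hq1 hq2 hq3
          (SofF G q ((List.ofFn a).take i)) t (a ⟨i, hlt⟩) hperm' hhon' hmem
        rw [hS1]
        refine ⟨hm2, le_trans hc2 ?_⟩
        calc natF Δ ((SofF G q ((List.ofFn a).take i)).card - 1)
            ≤ natF Δ ((natF Δ)^[i] (n - 1)) := natF_mono Δ hcard
          _ = (natF Δ)^[i+1] (n - 1) := (Function.iterate_succ_apply' _ _ _).symm
    have hTfull : (List.ofFn a).take T = List.ofFn a :=
      List.take_of_length_le (by simp)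
    obtain ⟨hmem, hcard⟩ := key T le_rfl
    rw [hTfull] at hmem hcard
    have h0 : (natF Δ)^[T] (n - 1) = 0 := steps_spec Δ (n - 1)
    rw [h0] at hcard
    have hone : (SofF G q (List.ofFn a)).card ≤ 1 := by omega
    have hx : (SofF G q (List.ofFn a)).Nonempty := ⟨t, hmem⟩
    show (if hx : (SofF G q (List.ofFn a)).Nonempty then hx.choose
      else Classical.arbitrary V) = t
    rw [dif_pos hx]
    exact Finset.card_le_one.mp hone _ hx.choose_spec t hmem
end

section
/- Let G be a connected finite simple graph with vertex set V and shortest-path distance d, let μ : V → ℝ be a nonnegative weight function, and let Γ > 1 be a real number. Suppose q ∈ V minimizes the potential Φ(x) = Σ_{u∈V} μ(u)·d(x,u) over all vertices x ∈ V, and let v be a neighbor of q. Then μ(N(q,v)) + (1/Γ)·μ(V ∖ N(q,v)) ≤ ((Γ+1)/(2Γ))·μ(V), where N(q,v) = {u ∈ V : d(v,u) + 1 = d(q,u)} and μ(S) = Σ_{u∈S} μ(u). -/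
open Finset

attribute [local instance] Classical.propDecidable

theorem median_no_answer {V : Type*} [Fintype V] (G : SimpleGraph V) (hG : G.Connected)
    (μ : V → ℝ) (hμ : ∀ u, 0 ≤ μ u) (Γ : ℝ) (hΓ : 1 < Γ) (q v : V) (hqv : G.Adj q v)
    (hmed : ∀ x : V, ∑ u, μ u * (G.dist q u : ℝ) ≤ ∑ u, μ u * (G.dist x u : ℝ)) :
    (∑ u ∈ Finset.univ.filter (fun u => G.dist v u + 1 = G.dist q u), μ u)
      + (1 / Γ) * ∑ u ∈ Finset.univ.filter (fun u => ¬ (G.dist v u + 1 = G.dist q u)), μ u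
      ≤ ((Γ + 1) / (2 * Γ)) * ∑ u, μ u := by
  classical
  set p : V → Prop := fun u => G.dist v u + 1 = G.dist q u with hp
  have hqv1 : G.dist q v = 1 := (SimpleGraph.dist_eq_one_iff_adj).2 hqv
  have hvq1 : G.dist v q = 1 := (SimpleGraph.dist_eq_one_iff_adj).2 hqv.symm
  -- triangle bounds
  have htri1 : ∀ u, G.dist q u ≤ G.dist v u + 1 := by
    intro u
    calc G.dist q u ≤ G.dist q v + G.dist v u := hG.dist_triangle
      _ = G.dist v u + 1 := by rw [hqv1]; ring
  have htri2 : ∀ u, G.dist v u ≤ G.dist q u + 1 := by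
    intro u
    calc G.dist v u ≤ G.dist v q + G.dist q u := hG.dist_triangle
      _ = G.dist q u + 1 := by rw [hvq1]; ring
  -- key: A ≤ B
  have hsplit : ∀ f : V → ℝ, ∑ u, f u =
      ∑ u ∈ univ.filter p, f u + ∑ u ∈ univ.filter (fun u => ¬ p u), f u := by
    intro f; rw [sum_filter_add_sum_filter_not]
  have hkey : (∑ u ∈ univ.filter p, μ u) ≤ ∑ u ∈ univ.filter (fun u => ¬ p u), μ u := by
    have hm := hmed v
    rw [hsplit (fun u => μ u * (G.dist q u : ℝ)), hsplit (fun u => μ u * (G.dist v u : ℝ))] at hm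
    have h1 : ∑ u ∈ univ.filter p, μ u * (G.dist q u : ℝ)
        = ∑ u ∈ univ.filter p, μ u * (G.dist v u : ℝ) + ∑ u ∈ univ.filter p, μ u := by
      rw [← sum_add_distrib]
      apply sum_congr rfl
      intro u hu
      have := (mem_filter.1 hu).2
      have : ((G.dist q u : ℝ)) = (G.dist v u : ℝ) + 1 := by
        exact_mod_cast this.symm
      rw [this]; ring
    have h2 : ∑ u ∈ univ.filter (fun u => ¬ p u), μ u * (G.dist v u : ℝ)
        ≤ ∑ u ∈ univ.filter (fun u => ¬ p u), (μ u * (G.dist q u : ℝ) + μ u) := by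
      apply sum_le_sum
      intro u hu
      have hle : (G.dist v u : ℝ) ≤ (G.dist q u : ℝ) + 1 := by exact_mod_cast htri2 u
      nlinarith [hμ u]
    rw [sum_add_distrib] at h2
    linarith
  have hμA : 0 ≤ ∑ u ∈ univ.filter p, μ u := sum_nonneg fun u _ => hμ u
  have hμB : 0 ≤ ∑ u ∈ univ.filter (fun u => ¬ p u), μ u := sum_nonneg fun u _ => hμ u
  have hΓ0 : 0 < Γ := lt_trans one_pos hΓ
  rw [hsplit μ]
  set A := ∑ u ∈ univ.filter p, μ u
  set B := ∑ u ∈ univ.filter (fun u => ¬ p u), μ u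
  rw [show (Γ + 1) / (2 * Γ) * (A + B) = ((Γ + 1) * (A + B)) / (2 * Γ) from by ring,
    le_div_iff₀ (by positivity)]
  have : (A + 1 / Γ * B) * (2 * Γ) = 2 * Γ * A + 2 * B := by
    field_simp
  rw [this]
  nlinarith [hkey]
end

section
/- Let G be a connected finite simple graph with vertex set V, edge set E, and shortest-path distance d, and let μ : V → ℝ be a nonnegative weight function. Suppose the edge e = {q,v} ∈ E minimizes the edge potential Φ(e') = Σ_{u∈V} μ(u)·min(d(x,u), d(y,u)) over all edges e' = {x,y} ∈ E, and suppose that the degree of q in G is at least 2. Then μ(V ∖ N(e,q)) ≥ (μ(V) − μ(q)) / deg(q), where N(e,q) = {w ∈ V : d(q,w) ≤ d(v,w)} and μ(S) = Σ_{u∈S} μ(u). -/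
open Finset

attribute [local instance] Classical.propDecidable

lemma phi_split {V : Type*} [Fintype V] (G : SimpleGraph V) (hG : G.Connected)
    (μ : V → ℝ) (x y : V) (hxy : G.Adj x y) :
    ∑ u, μ u * (min (G.dist x u) (G.dist y u) : ℝ)
      = ∑ u, μ u * (G.dist x u : ℝ)
        - ∑ u ∈ Finset.univ.filter (fun w => G.dist y w < G.dist x w), μ u := by
  have hxy1 : G.dist x y = 1 := SimpleGraph.dist_eq_one_iff_adj.mpr hxy
  have hpt : ∀ u, μ u * (min (G.dist x u) (G.dist y u) : ℝ)
      = μ u * (G.dist x u : ℝ) - (if G.dist y u < G.dist x u then μ u else 0) := by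
    intro u
    by_cases h : G.dist y u < G.dist x u
    · have htri : G.dist x u ≤ G.dist x y + G.dist y u := hG.dist_triangle
      rw [hxy1] at htri
      have hx : G.dist x u = G.dist y u + 1 := by omega
      have hmin : min ((G.dist x u : ℝ)) ((G.dist y u : ℝ)) = (G.dist y u : ℝ) :=
        min_eq_right (by exact_mod_cast h.le)
      rw [hmin, if_pos h, hx]
      push_cast
      ring
    · have hmin : min ((G.dist x u : ℝ)) ((G.dist y u : ℝ)) = (G.dist x u : ℝ) :=
        min_eq_left (by exact_mod_cast not_lt.mp h)
      rw [hmin, if_neg h]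
      ring
  rw [Finset.sum_congr rfl fun u _ => hpt u, Finset.sum_sub_distrib, Finset.sum_filter]

theorem edge_median_degree_bound {V : Type*} [Fintype V] (G : SimpleGraph V)
    [DecidableRel G.Adj] (hG : G.Connected) (μ : V → ℝ) (hμ : ∀ u, 0 ≤ μ u)
    (q v : V) (hqv : G.Adj q v)
    (hmed : ∀ x y : V, G.Adj x y →
      ∑ u, μ u * (min (G.dist q u) (G.dist v u) : ℝ)
        ≤ ∑ u, μ u * (min (G.dist x u) (G.dist y u) : ℝ))
    (hdeg : 2 ≤ G.degree q) :
    ((∑ u, μ u) - μ q) / G.degree q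
      ≤ ∑ u ∈ Finset.univ.filter (fun w => ¬ (G.dist q w ≤ G.dist v w)), μ u := by
  -- rewrite the target set as a strict-inequality filter
  have hset : (Finset.univ.filter (fun w => ¬ (G.dist q w ≤ G.dist v w)))
      = Finset.univ.filter (fun w => G.dist v w < G.dist q w) := by
    apply Finset.filter_congr
    intro w _
    simp [not_le]
  rw [hset]
  set A : V → Finset V := fun y => Finset.univ.filter (fun w => G.dist y w < G.dist q w)
    with hA
  -- step 1: for any neighbor v' of q, μ(A v') ≤ μ(A v)
  have hstep1 : ∀ v', G.Adj q v' → ∑ u ∈ A v', μ u ≤ ∑ u ∈ A v, μ u := by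
    intro v' hv'
    have h1 := phi_split G hG μ q v hqv
    have h2 := phi_split G hG μ q v' hv'
    have h3 := hmed q v' hv'
    rw [h1, h2] at h3
    simp only [hA]
    linarith
  -- step 2: every u ≠ q belongs to some A v', v' neighbor of q
  have hstep2 : (∑ u, μ u) - μ q ≤ ∑ v' ∈ G.neighborFinset q, ∑ u ∈ A v', μ u := by
    have hsum : ∀ v', (∑ u ∈ A v', μ u)
        = ∑ u, (if G.dist v' u < G.dist q u then μ u else 0) := by
      intro v'; rw [hA]; rw [Finset.sum_filter]
    calc (∑ u, μ u) - μ q = ∑ u ∈ Finset.univ.erase q, μ u := by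
          rw [Finset.sum_erase_eq_sub (Finset.mem_univ q)]
      _ ≤ ∑ u ∈ Finset.univ.erase q,
            ∑ v' ∈ G.neighborFinset q, (if G.dist v' u < G.dist q u then μ u else 0) := by
          apply Finset.sum_le_sum
          intro u hu
          have hne : u ≠ q := Finset.ne_of_mem_erase hu
          -- there is a neighbor of q strictly closer to u
          have hd0 : G.dist q u ≠ 0 := by
            simp [SimpleGraph.dist_eq_zero_iff_eq_or_not_reachable, hne.symm,
              hG.preconnected q u]
          obtain ⟨p, hp⟩ := (hG.preconnected q u).exists_walk_length_eq_dist
          cases p with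
          | nil => exact absurd SimpleGraph.dist_self hd0
          | cons h p' =>
            rename_i w
            have hlt : G.dist w u < G.dist q u := by
              have := SimpleGraph.dist_le p'
              simp [SimpleGraph.Walk.length_cons] at hp
              omega
            have hw : w ∈ G.neighborFinset q := by
              simpa [SimpleGraph.mem_neighborFinset] using h
            calc μ u = (if G.dist w u < G.dist q u then μ u else 0) := by rw [if_pos hlt]
              _ ≤ ∑ v' ∈ G.neighborFinset q,
                    (if G.dist v' u < G.dist q u then μ u else 0) := by
                  apply Finset.single_le_sum (f := fun v' =>
                    (if G.dist v' u < G.dist q u then μ u else 0)) _ hw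
                  intro i _
                  by_cases hc : G.dist i u < G.dist q u <;> simp [hc, hμ u]
      _ = ∑ v' ∈ G.neighborFinset q,
            ∑ u ∈ Finset.univ.erase q, (if G.dist v' u < G.dist q u then μ u else 0) :=
          Finset.sum_comm
      _ ≤ ∑ v' ∈ G.neighborFinset q, ∑ u ∈ A v', μ u := by
          apply Finset.sum_le_sum
          intro v' _
          rw [hsum v']
          apply Finset.sum_le_sum_of_subset_of_nonneg (Finset.erase_subset _ _)
          intro i _ _
          by_cases hc : G.dist v' i < G.dist q i <;> simp [hc, hμ i]
  -- step 3: combine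
  have hcard : (G.neighborFinset q).card = G.degree q := rfl
  have hbound : (∑ u, μ u) - μ q ≤ (G.degree q : ℝ) * ∑ u ∈ A v, μ u := by
    calc (∑ u, μ u) - μ q ≤ ∑ v' ∈ G.neighborFinset q, ∑ u ∈ A v', μ u := hstep2
      _ ≤ ∑ _v' ∈ G.neighborFinset q, ∑ u ∈ A v, μ u := by
          apply Finset.sum_le_sum
          intro v' hv'
          exact hstep1 v' (by simpa [SimpleGraph.mem_neighborFinset] using hv')
      _ = (G.degree q : ℝ) * ∑ u ∈ A v, μ u := by
          rw [Finset.sum_const, hcard, nsmul_eq_mul]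
  have hpos : (0 : ℝ) < G.degree q := by exact_mod_cast Nat.lt_of_lt_of_le Nat.zero_lt_two hdeg
  have hAv : ∑ u ∈ Finset.univ.filter (fun w => G.dist v w < G.dist q w), μ u
      = ∑ u ∈ A v, μ u := rfl
  rw [hAv, div_le_iff₀ hpos]
  linarith
end

section
/- Let G be a connected finite simple graph with vertex set V, edge set E, maximum degree Δ ≥ 1 and shortest-path distance d, let μ : V → ℝ be a nonnegative weight function, and let Γ > 1 be a real number. Suppose the edge e = {q,v} ∈ E minimizes the edge potential Φ(e') = Σ_{u∈V} μ(u)·min(d(x,u), d(y,u)) over all edges e' = {x,y} ∈ E, and suppose μ(q) ≤ μ(V)/(Δ+1). Then μ(N(e,q)) + (1/Γ)·μ(V ∖ N(e,q)) ≤ (1 − (Γ−1)/(Γ·(Δ+1)))·μ(V), where N(e,q) = {w ∈ V : d(q,w) ≤ d(v,w)} and μ(S) = Σ_{u∈S} μ(u). -/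
open Finset

attribute [local instance] Classical.propDecidable

private lemma sum_biUnion_le_sum_sum {ι α : Type*} [DecidableEq α] (s : Finset ι)
    (t : ι → Finset α) (f : α → ℝ) (hf : ∀ x, 0 ≤ f x) :
    ∑ x ∈ s.biUnion t, f x ≤ ∑ i ∈ s, ∑ x ∈ t i, f x := by
  classical
  induction s using Finset.induction_on with
  | empty => simp
  | insert _ _ hns ih =>
    rename_i a s'
    rw [Finset.biUnion_insert, Finset.sum_insert hns]
    have hui : ∑ x ∈ t a ∪ s'.biUnion t, f x + ∑ x ∈ t a ∩ s'.biUnion t, f x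
        = ∑ x ∈ t a, f x + ∑ x ∈ s'.biUnion t, f x := Finset.sum_union_inter
    have h2 : 0 ≤ ∑ x ∈ t a ∩ s'.biUnion t, f x := Finset.sum_nonneg fun x _ => hf x
    linarith

theorem edge_median_not_heavy_decrease {V : Type*} [Fintype V] (G : SimpleGraph V)
    [DecidableRel G.Adj] (hG : G.Connected) (hΔ : 1 ≤ G.maxDegree)
    (μ : V → ℝ) (hμ : ∀ u, 0 ≤ μ u) (Γ : ℝ) (hΓ : 1 < Γ)
    (q v : V) (hqv : G.Adj q v)
    (hmed : ∀ x y : V, G.Adj x y →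
      ∑ u, μ u * (min (G.dist q u) (G.dist v u) : ℝ)
        ≤ ∑ u, μ u * (min (G.dist x u) (G.dist y u) : ℝ))
    (hq : μ q ≤ (∑ u, μ u) / (G.maxDegree + 1)) :
    (∑ u ∈ Finset.univ.filter (fun w => G.dist q w ≤ G.dist v w), μ u)
      + (1 / Γ) * ∑ u ∈ Finset.univ.filter (fun w => ¬ (G.dist q w ≤ G.dist v w)), μ u
      ≤ (1 - (Γ - 1) / (Γ * (G.maxDegree + 1))) * ∑ u, μ u := by
  classical
  set s : ℝ := ∑ u, μ u with hs
  set D : ℝ := (G.maxDegree : ℝ) with hD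
  -- potential identity for adjacent pairs
  have key : ∀ x y : V, G.Adj x y →
      ∑ u, μ u * (min (G.dist x u) (G.dist y u) : ℝ)
        = (∑ u, μ u * (G.dist x u : ℝ))
          - ∑ u ∈ Finset.univ.filter (fun w => G.dist y w < G.dist x w), μ u := by
    intro x y hxy
    rw [Finset.sum_filter, ← Finset.sum_sub_distrib]
    refine Finset.sum_congr rfl fun u _ => ?_
    by_cases h : G.dist y u < G.dist x u
    · have htri : G.dist x u ≤ G.dist x y + G.dist y u := hG.dist_triangle
      have hone : G.dist x y = 1 := SimpleGraph.dist_eq_one_iff_adj.mpr hxy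
      have heq : G.dist x u = G.dist y u + 1 := by omega
      have hmin : min ((G.dist x u : ℝ)) ((G.dist y u : ℝ)) = (G.dist y u : ℝ) :=
        min_eq_right (by exact_mod_cast h.le)
      rw [if_pos h, hmin, heq]
      push_cast
      ring
    · have hmin : min ((G.dist x u : ℝ)) ((G.dist y u : ℝ)) = (G.dist x u : ℝ) :=
        min_eq_left (by exact_mod_cast not_lt.mp h)
      rw [if_neg h, hmin]
      ring
  -- B = far side of the edge
  set B : Finset V := Finset.univ.filter (fun w => G.dist v w < G.dist q w) with hB
  -- median property: for every neighbor w of q, μ(B_w) ≤ μ(B)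
  have hmed' : ∀ w : V, G.Adj q w →
      ∑ u ∈ Finset.univ.filter (fun z => G.dist w z < G.dist q z), μ u
        ≤ ∑ u ∈ B, μ u := by
    intro w hw
    have h1 := hmed q w hw
    rw [key q v hqv, key q w hw] at h1
    rw [hB]
    linarith
  -- covering: every u ≠ q lies in some B_w
  have hcover : (Finset.univ.erase q) ⊆
      (G.neighborFinset q).biUnion
        (fun w => Finset.univ.filter (fun z => G.dist w z < G.dist q z)) := by
    intro u hu
    have hne : u ≠ q := Finset.ne_of_mem_erase hu
    have hpos : 0 < G.dist q u := by
      rcases Nat.eq_zero_or_pos (G.dist q u) with h0 | h0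
      · exfalso
        rcases SimpleGraph.dist_eq_zero_iff_eq_or_not_reachable.mp h0 with h | h
        · exact hne h.symm
        · exact h (hG q u)
      · exact h0
    obtain ⟨p, hp⟩ := hG.exists_walk_length_eq_dist q u
    cases p with
    | nil => simp at hpos
    | @cons _ b _ hadj p' =>
      refine Finset.mem_biUnion.mpr ⟨b, ?_, ?_⟩
      · rwa [SimpleGraph.mem_neighborFinset]
      · simp only [Finset.mem_filter, Finset.mem_univ, true_and]
        have hle : G.dist b u ≤ p'.length := SimpleGraph.dist_le p'
        simp only [SimpleGraph.Walk.length_cons] at hp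
        omega
  -- main inequality: s - μ q ≤ D * μ(B)
  have hBnonneg : 0 ≤ ∑ u ∈ B, μ u := Finset.sum_nonneg fun u _ => hμ u
  have hD1 : (1 : ℝ) ≤ D := by rw [hD]; exact_mod_cast hΔ
  have hmain : s - μ q ≤ D * ∑ u ∈ B, μ u := by
    have h1 : ∑ u ∈ Finset.univ.erase q, μ u = s - μ q := by
      rw [hs, ← Finset.add_sum_erase _ μ (Finset.mem_univ q)]
      ring
    have h2 : ∑ u ∈ Finset.univ.erase q, μ u
        ≤ ∑ w ∈ G.neighborFinset q,
            ∑ u ∈ Finset.univ.filter (fun z => G.dist w z < G.dist q z), μ u := by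
      refine le_trans (Finset.sum_le_sum_of_subset_of_nonneg hcover fun u _ _ => hμ u) ?_
      exact sum_biUnion_le_sum_sum _ _ _ hμ
    have h3 : ∑ w ∈ G.neighborFinset q,
          ∑ u ∈ Finset.univ.filter (fun z => G.dist w z < G.dist q z), μ u
        ≤ (G.degree q : ℝ) * ∑ u ∈ B, μ u := by
      rw [← SimpleGraph.card_neighborFinset_eq_degree, ← nsmul_eq_mul, ← Finset.sum_const]
      refine Finset.sum_le_sum fun w hw => ?_
      exact hmed' w ((SimpleGraph.mem_neighborFinset _ _ _).mp hw)
    have h4 : (G.degree q : ℝ) ≤ D := by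
      rw [hD]; exact_mod_cast G.degree_le_maxDegree q
    nlinarith [mul_le_mul_of_nonneg_right h4 hBnonneg]
  -- from hq and hmain: s ≤ (D + 1) * μ(B)
  have hq2 : μ q * (D + 1) ≤ s := (le_div_iff₀ (by linarith)).mp hq
  have hBlarge : s ≤ (D + 1) * ∑ u ∈ B, μ u := by nlinarith
  -- rewrite the goal
  have hBeq : ∑ u ∈ Finset.univ.filter (fun w => ¬ (G.dist q w ≤ G.dist v w)), μ u
      = ∑ u ∈ B, μ u := by
    rw [hB]
    refine Finset.sum_congr (Finset.filter_congr fun w _ => ?_) fun _ _ => rfl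
    simp [not_le]
  have hsplit : (∑ u ∈ Finset.univ.filter (fun w => G.dist q w ≤ G.dist v w), μ u)
      + ∑ u ∈ Finset.univ.filter (fun w => ¬ (G.dist q w ≤ G.dist v w)), μ u = s := by
    rw [hs, Finset.sum_filter_add_sum_filter_not]
  rw [hBeq] at hsplit ⊢
  have hΓ0 : (0 : ℝ) < Γ := by linarith
  have c1 : 0 ≤ (Γ - 1) / (Γ * (D + 1)) :=
    div_nonneg (by linarith) (by nlinarith)
  have key2 : (Γ - 1) / (Γ * (D + 1)) * s
      ≤ (∑ u ∈ B, μ u) - (1 / Γ) * ∑ u ∈ B, μ u := by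
    have step1 := mul_le_mul_of_nonneg_left hBlarge c1
    have step2 : (Γ - 1) / (Γ * (D + 1)) * ((D + 1) * ∑ u ∈ B, μ u)
        = (∑ u ∈ B, μ u) - (1 / Γ) * ∑ u ∈ B, μ u := by
      field_simp
    linarith [step2 ▸ step1]
  have hexp : (1 - (Γ - 1) / (Γ * (D + 1))) * s = s - (Γ - 1) / (Γ * (D + 1)) * s := by ring
  linarith
end

section
/- For all real numbers x with −1 ≤ x ≤ 1 and α with 0 ≤ α ≤ 1, it holds that F(α·x) ≥ F(α)·F(x), where F(x) = 1 − H((1−x)/2). Equivalently, whenever F(α·x) > 0, F(x)/F(α·x) ≤ 1/F(α). -/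
/-- The binary entropy function `H(x) = -x log₂ x - (1-x) log₂ (1-x)`
(with the convention `0 · log₂ 0 = 0`, automatic since `Real.logb 2 0 = 0`). -/
noncomputable def binH (x : ℝ) : ℝ :=
  -x * Real.logb 2 x - (1 - x) * Real.logb 2 (1 - x)

/-- `F(x) = 1 - H((1-x)/2)`. -/
noncomputable def entF (x : ℝ) : ℝ := 1 - binH ((1 - x) / 2)

open Real Set

lemma binH_eq (p : ℝ) : binH p = Real.binEntropy p / Real.log 2 := by
  have h2 : Real.log 2 ≠ 0 := by positivity
  simp only [binH, Real.binEntropy, Real.logb, Real.log_inv]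
  field_simp
  ring

lemma entF_eq (x : ℝ) : entF x = 1 - Real.binEntropy ((1 - x) / 2) / Real.log 2 := by
  rw [entF, binH_eq]

lemma entF_zero : entF 0 = 0 := by
  have h2 : Real.log 2 ≠ 0 := by positivity
  rw [entF_eq, show (1-(0:ℝ))/2 = 2⁻¹ by norm_num, Real.binEntropy_two_inv]
  field_simp
  norm_num

lemma entF_one : entF 1 = 1 := by
  rw [entF_eq]; norm_num

lemma entF_neg (x : ℝ) : entF (-x) = entF x := by
  rw [entF_eq, entF_eq]
  have : (1 - -x) / 2 = 1 - (1 - x) / 2 := by ring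
  rw [this, Real.binEntropy_one_sub]

lemma entF_continuous : Continuous entF := by
  simp only [funext entF_eq]
  fun_prop

lemma entF_nonneg {x : ℝ} : 0 ≤ entF x := by
  rw [entF_eq]
  have h := Real.binEntropy_le_log_two (p := (1 - x) / 2)
  have h2 : (0:ℝ) < Real.log 2 := by positivity
  rw [sub_nonneg, div_le_one h2]
  exact h

lemma entF_pos {x : ℝ} (hx : 0 < x) : 0 < entF x := by
  rw [entF_eq]
  have h2 : (0:ℝ) < Real.log 2 := by positivity
  have h : Real.binEntropy ((1 - x) / 2) < Real.log 2 := by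
    rw [Real.binEntropy_lt_log_two]
    intro h
    rw [div_eq_iff (by norm_num : (2:ℝ) ≠ 0)] at h
    norm_num at h
    linarith
  rw [sub_pos, div_lt_one h2]
  exact h

noncomputable def lg (t : ℝ) : ℝ := Real.log (1 + t) - Real.log (1 - t)

lemma lg_hasDerivAt {t : ℝ} (h1 : -1 < t) (h2 : t < 1) :
    HasDerivAt lg (1/(1+t) + 1/(1-t)) t := by
  have hp : (0:ℝ) < 1 + t := by linarith
  have hm : (0:ℝ) < 1 - t := by linarith
  have ha : HasDerivAt (fun s : ℝ => Real.log (1 + s)) (1/(1+t)) t := by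
    have := (((hasDerivAt_id t).const_add 1).log hp.ne')
    simpa [one_div] using this
  have hb : HasDerivAt (fun s : ℝ => Real.log (1 - s)) (-(1/(1-t))) t := by
    have := (((hasDerivAt_id t).const_sub 1).log hm.ne')
    simpa [one_div, neg_div] using this
  have := ha.sub hb
  rw [sub_neg_eq_add] at this
  exact this

lemma lg_nonneg {t : ℝ} (h0 : 0 ≤ t) (h1 : t < 1) : 0 ≤ lg t := by
  have : Real.log (1 - t) ≤ Real.log (1 + t) :=
    Real.log_le_log (by linarith) (by linarith)
  simpa [lg, sub_nonneg] using this

lemma lg_pos {t : ℝ} (h0 : 0 < t) (h1 : t < 1) : 0 < lg t := by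
  have : Real.log (1 - t) < Real.log (1 + t) :=
    Real.log_lt_log (by linarith) (by linarith)
  simpa [lg, sub_pos] using this

lemma two_mul_le_lg {y : ℝ} (h0 : 0 ≤ y) (h1 : y < 1) : 2 * y ≤ lg y := by
  have hmono : MonotoneOn (fun t => lg t - 2 * t) (Icc 0 y) := by
    apply monotoneOn_of_deriv_nonneg (convex_Icc 0 y)
    · apply ContinuousOn.sub _ (by fun_prop)
      apply ContinuousOn.sub
      · exact (Real.continuousOn_log.comp (by fun_prop) (fun s hs => by
          simp only [mem_Icc] at hs; simp; intro h; linarith [hs.1]))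
      · exact (Real.continuousOn_log.comp (by fun_prop) (fun s hs => by
          simp only [mem_Icc] at hs; simp; intro h; linarith [hs.2]))
    · intro s hs
      rw [interior_Icc] at hs
      exact (((lg_hasDerivAt (by linarith [hs.1]) (by linarith [hs.2])).sub
        ((hasDerivAt_id' (x := s)).const_mul 2)).differentiableAt).differentiableWithinAt
    · intro s hs
      rw [interior_Icc] at hs
      have hd := ((lg_hasDerivAt (by linarith [hs.1] : (-1:ℝ) < s)
        (by linarith [hs.2])).sub ((hasDerivAt_id' (x := s)).const_mul 2))
      rw [show (fun t => lg t - 2 * t) = (lg - fun y => 2 * y) from rfl, hd.deriv]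
      have hp : (0:ℝ) < 1 + s := by linarith [hs.1]
      have hm : (0:ℝ) < 1 - s := by linarith [hs.2]
      have h1s : 0 < s := hs.1
      rw [div_add_div _ _ hp.ne' hm.ne', sub_nonneg, le_div_iff₀ (by positivity)]
      nlinarith
  have h := hmono (left_mem_Icc.2 h0) (right_mem_Icc.2 h0) h0
  have hlg0 : lg 0 = 0 := by simp [lg]
  simp only [hlg0] at h
  linarith

lemma one_sub_sq_pos {t : ℝ} (h0 : -1 < t) (h1 : t < 1) : 0 < 1 - t^2 := by nlinarith

lemma phi_hasDerivAt {t : ℝ} (ht : t ∈ Ioo (0:ℝ) 1) :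
    HasDerivAt (fun t => (1 - t^2) * lg t / t)
      ((((-(2*t)) * lg t + (1 - t^2) * (1/(1+t) + 1/(1-t))) * t - (1 - t^2) * lg t * 1) / t^2) t := by
  obtain ⟨h0, h1⟩ := ht
  have hn : HasDerivAt (fun t : ℝ => (1 - t^2) * lg t)
      ((-(2*t)) * lg t + (1 - t^2) * (1/(1+t) + 1/(1-t))) t := by
    have h1' : HasDerivAt (fun t : ℝ => 1 - t^2) (-(2*t)) t := by
      simpa using ((hasDerivAt_pow 2 t).const_sub 1)
    exact h1'.mul (lg_hasDerivAt (by linarith) h1)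
  exact hn.div (hasDerivAt_id t) h0.ne'

lemma phi_anti : AntitoneOn (fun t => (1 - t^2) * lg t / t) (Ioo (0:ℝ) 1) := by
  apply antitoneOn_of_deriv_nonpos (convex_Ioo 0 1)
  · intro t ht
    exact (phi_hasDerivAt ht).differentiableAt.continuousAt.continuousWithinAt
  · rw [interior_Ioo]
    intro t ht
    exact (phi_hasDerivAt ht).differentiableAt.differentiableWithinAt
  · rw [interior_Ioo]
    intro t ht
    rw [(phi_hasDerivAt ht).deriv]
    obtain ⟨h0, h1⟩ := ht
    have hp : (0:ℝ) < 1 + t := by linarith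
    have hm : (0:ℝ) < 1 - t := by linarith
    have hkey : 2 * t ≤ lg t := two_mul_le_lg h0.le h1
    have hlg : 0 ≤ lg t := by linarith
    have hexp : (1 - t^2) * (1/(1+t) + 1/(1-t)) = 2 := by
      field_simp
      ring
    rw [hexp]
    apply div_nonpos_of_nonpos_of_nonneg _ (by positivity)
    nlinarith

lemma q_hasDerivAt {α t : ℝ} (hα0 : 0 < α) (hα1 : α < 1) (ht : t ∈ Ioo (0:ℝ) 1) :
    HasDerivAt (fun t => α * lg (α * t) / lg t)
      ((α * ((1/(1+α*t) + 1/(1-α*t)) * α) * lg t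
        - α * lg (α * t) * (1/(1+t) + 1/(1-t))) / (lg t)^2) t := by
  obtain ⟨h0, h1⟩ := ht
  have hat0 : 0 < α * t := mul_pos hα0 h0
  have hat1 : α * t < 1 := by nlinarith
  have hn : HasDerivAt (fun t : ℝ => α * lg (α * t)) (α * ((1/(1+α*t) + 1/(1-α*t)) * α)) t := by
    have hc : HasDerivAt (fun t : ℝ => α * t) α t := by
      simpa using (hasDerivAt_id t).const_mul α
    exact (HasDerivAt.comp t (lg_hasDerivAt (by linarith) hat1) hc).const_mul α
  exact hn.div (lg_hasDerivAt (by linarith) h1) (lg_pos h0 h1).ne'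

lemma q_anti {α : ℝ} (hα0 : 0 < α) (hα1 : α < 1) :
    AntitoneOn (fun t => α * lg (α * t) / lg t) (Ioo (0:ℝ) 1) := by
  apply antitoneOn_of_deriv_nonpos (convex_Ioo 0 1)
  · intro t ht
    exact (q_hasDerivAt hα0 hα1 ht).differentiableAt.continuousAt.continuousWithinAt
  · rw [interior_Ioo]
    intro t ht
    exact (q_hasDerivAt hα0 hα1 ht).differentiableAt.differentiableWithinAt
  · rw [interior_Ioo]
    intro t ht
    rw [(q_hasDerivAt hα0 hα1 ht).deriv]
    obtain ⟨h0, h1⟩ := ht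
    have hat0 : 0 < α * t := mul_pos hα0 h0
    have hat1 : α * t < 1 := by nlinarith
    have hp : (0:ℝ) < 1 + t := by linarith
    have hm : (0:ℝ) < 1 - t := by linarith
    have hap : (0:ℝ) < 1 + α*t := by linarith
    have ham : (0:ℝ) < 1 - α*t := by linarith
    apply div_nonpos_of_nonpos_of_nonneg _ (by positivity)
    -- key: from phi antitone at α*t ≤ t
    have hphi := phi_anti (a := α*t) (b := t) ⟨hat0, hat1⟩ ⟨h0, h1⟩
      (by nlinarith : α * t ≤ t)
    simp only [] at hphi
    rw [div_le_div_iff₀ h0 hat0] at hphi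
    -- hphi : (1 - t^2) * lg t * (α*t) ≤ (1 - (α*t)^2) * lg (α*t) * t
    have e1 : 1/(1+α*t) + 1/(1-α*t) = 2 / (1 - (α*t)^2) := by
      rw [div_add_div _ _ hap.ne' ham.ne']
      congr 1 <;> ring
    have e2 : 1/(1+t) + 1/(1-t) = 2 / (1 - t^2) := by
      rw [div_add_div _ _ hp.ne' hm.ne']
      congr 1 <;> ring
    rw [sub_nonpos]
    have hmt : (0:ℝ) < 1 - t^2 := by nlinarith
    have hmat : (0:ℝ) < 1 - (α*t)^2 := by nlinarith
    have hlgt : 0 ≤ lg t := lg_nonneg h0.le h1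
    have hlgat : 0 ≤ lg (α*t) := lg_nonneg hat0.le hat1
    have H : (α * (2 * α) * lg t) * (1 - t^2) ≤ (α * lg (α*t) * 2) * (1 - (α*t)^2) := by
      nlinarith [mul_le_mul_of_nonneg_left hphi (le_of_lt hα0)]
    calc α * ((1/(1+α*t) + 1/(1-α*t)) * α) * lg t
        = (α * (2 * α) * lg t) / (1 - (α*t)^2) := by rw [e1]; ring
      _ ≤ (α * lg (α*t) * 2) / (1 - t^2) := by
          rw [div_le_div_iff₀ hmat hmt]; exact H
      _ = α * lg (α*t) * (1/(1+t) + 1/(1-t)) := by rw [e2]; ring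

lemma entF_hasDerivAt {t : ℝ} (h0 : -1 < t) (h1 : t < 1) :
    HasDerivAt entF (lg t / (2 * Real.log 2)) t := by
  have hp0 : (1 - t)/2 ≠ 0 := by intro h; nlinarith [h]
  have hp1 : (1 - t)/2 ≠ 1 := by intro h; nlinarith [h]
  have hb := Real.hasDerivAt_binEntropy hp0 hp1
  have hc : HasDerivAt (fun s : ℝ => (1 - s)/2) (-1/2) t :=
    (((hasDerivAt_id t).const_sub 1)).div_const 2
  have hcomp := (HasDerivAt.comp t hb hc).div_const (Real.log 2)
  have h2 : (0:ℝ) < Real.log 2 := by positivity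
  have heq : entF = fun s => 1 - Real.binEntropy ((1 - s)/2) / Real.log 2 := funext entF_eq
  rw [heq]
  have hfinal := hcomp.const_sub 1
  refine hfinal.congr_deriv ?_
  have hpp : (0:ℝ) < 1 + t := by linarith
  have hpm : (0:ℝ) < 1 - t := by linarith
  have l1 : 1 - (1 - t)/2 = (1 + t)/2 := by ring
  rw [l1, Real.log_div hpp.ne' (by norm_num), Real.log_div hpm.ne' (by norm_num)]
  field_simp [lg]
  rw [lg]
  ring

lemma core {α x : ℝ} (hα0 : 0 < α) (hα1 : α < 1) (hx0 : 0 < x) (hx1 : x < 1) :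
    entF α * entF x ≤ entF (α * x) := by
  set c := entF α with hc
  set g : ℝ → ℝ := fun t => entF (α * t) - c * entF t with hg
  have hgderiv : ∀ t ∈ Ioo (0:ℝ) 1, HasDerivAt g
      ((α * lg (α * t) - c * lg t) / (2 * Real.log 2)) t := by
    intro t ht
    obtain ⟨h0, h1⟩ := ht
    have hat1 : α * t < 1 := by nlinarith
    have hat0 : -1 < α * t := by nlinarith
    have hmul : HasDerivAt (fun t : ℝ => α * t) α t := by
      simpa using (hasDerivAt_id t).const_mul α
    have h1' : HasDerivAt (fun t : ℝ => entF (α * t)) (lg (α * t) / (2 * Real.log 2) * α) t :=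
      (entF_hasDerivAt hat0 hat1).comp t hmul
    have h2' := (entF_hasDerivAt (by linarith) h1).const_mul c
    have := h1'.sub h2'
    refine this.congr_deriv ?_
    field_simp
  have hgcont : Continuous g := by
    have := entF_continuous
    fun_prop
  have hlog2 : (0:ℝ) < 2 * Real.log 2 := by positivity
  have hg0 : g 0 = 0 := by simp [hg, entF_zero]
  have hg1 : g 1 = 0 := by simp [hg, entF_one, hc]
  -- single crossing
  by_cases hcase : ∃ s ∈ Ioo (0:ℝ) x, α * lg (α * s) - c * lg s < 0
  · obtain ⟨s, hs, hneg⟩ := hcase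
    have hs1 : s ∈ Ioo (0:ℝ) 1 := ⟨hs.1, lt_trans hs.2 hx1⟩
    -- g is antitone on [x, 1]
    have hanti : AntitoneOn g (Icc x 1) := by
      apply antitoneOn_of_deriv_nonpos (convex_Icc x 1) (hgcont.continuousOn)
      · rw [interior_Icc]
        intro t ht
        exact (hgderiv t ⟨lt_trans hx0 ht.1, ht.2⟩).differentiableAt.differentiableWithinAt
      · rw [interior_Icc]
        intro t ht
        have ht' : t ∈ Ioo (0:ℝ) 1 := ⟨lt_trans hx0 ht.1, ht.2⟩
        rw [(hgderiv t ht').deriv]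
        apply div_nonpos_of_nonpos_of_nonneg _ hlog2.le
        -- use q antitone from s to t
        have hqs := q_anti hα0 hα1 hs1 ht' (le_of_lt (lt_trans hs.2 ht.1))
        simp only [] at hqs
        have hlgs : 0 < lg s := lg_pos hs1.1 hs1.2
        have hlgt : 0 < lg t := lg_pos ht'.1 ht'.2
        have h1 : α * lg (α * s) / lg s < c := by
          rw [div_lt_iff₀ hlgs]; linarith
        have h2 : α * lg (α * t) / lg t < c := lt_of_le_of_lt hqs h1
        rw [div_lt_iff₀ hlgt] at h2
        linarith
    have := hanti (left_mem_Icc.2 hx1.le) (right_mem_Icc.2 hx1.le) hx1.le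
    rw [hg1] at this
    simpa [hg, sub_nonneg, mul_comm] using this
  · push_neg at hcase
    have hmono : MonotoneOn g (Icc 0 x) := by
      apply monotoneOn_of_deriv_nonneg (convex_Icc 0 x) (hgcont.continuousOn)
      · rw [interior_Icc]
        intro t ht
        exact (hgderiv t ⟨ht.1, lt_trans ht.2 hx1⟩).differentiableAt.differentiableWithinAt
      · rw [interior_Icc]
        intro t ht
        rw [(hgderiv t ⟨ht.1, lt_trans ht.2 hx1⟩).deriv]
        exact div_nonneg (hcase t ht) hlog2.le
    have := hmono (left_mem_Icc.2 hx0.le) (right_mem_Icc.2 hx0.le) hx0.le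
    rw [hg0] at this
    simpa [hg, sub_nonneg, mul_comm] using this

lemma part1 {x α : ℝ} (hx0 : 0 ≤ x) (hx1 : x ≤ 1) (hα : 0 ≤ α) (hα' : α ≤ 1) :
    entF α * entF x ≤ entF (α * x) := by
  rcases eq_or_lt_of_le hα with h | hα0
  · rw [← h]; simp [entF_zero]
  rcases eq_or_lt_of_le hα' with h | hα1
  · rw [h]; simp [entF_one]
  rcases eq_or_lt_of_le hx0 with h | hx0'
  · rw [← h]; simp [entF_zero]
  rcases eq_or_lt_of_le hx1 with h | hx1'
  · rw [h]; simp [entF_one]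
  exact core hα0 hα1 hx0' hx1'

theorem entF_mul_le {x α : ℝ} (hx : -1 ≤ x) (hx' : x ≤ 1) (hα : 0 ≤ α) (hα' : α ≤ 1) :
    entF α * entF x ≤ entF (α * x) ∧
    (0 < entF (α * x) → entF x / entF (α * x) ≤ 1 / entF α) := by
  have h1 : entF α * entF x ≤ entF (α * x) := by
    rcases le_or_gt 0 x with h | h
    · exact part1 h hx' hα hα'
    · have := part1 (x := -x) (by linarith) (by linarith) hα hα'
      rwa [entF_neg, show α * -x = -(α * x) by ring, entF_neg] at this
  refine ⟨h1, fun hpos => ?_⟩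
  have hα0 : 0 < α := by
    rcases eq_or_lt_of_le hα with h | h
    · exfalso
      rw [← h, zero_mul, entF_zero] at hpos
      exact lt_irrefl 0 hpos
    · exact h
  have hFα : 0 < entF α := entF_pos hα0
  rw [div_le_div_iff₀ hpos hFα, one_mul, mul_comm]
  exact h1
end

section
/- Let Δ ≥ 1 be an integer and let ε be a real number with 0 < ε < 1. Set r = (1−ε)/(Δ+1) and Γ = (1−r)/(r·Δ). Then ln(1 + (Γ−1)/(Γ·Δ+1)) − r·ln Γ = F(ε)/(Δ+1) + (Δ/(Δ+1))·F(−ε/Δ), where F(x) = x + (1−x)·ln(1−x). -/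
/-- `F(x) = x + (1-x) ln (1-x)`. -/
noncomputable def rateF (x : ℝ) : ℝ := x + (1 - x) * Real.log (1 - x)

theorem edge_rate_identity (Δ : ℕ) (hΔ : 1 ≤ Δ) (ε : ℝ) (hε0 : 0 < ε) (hε1 : ε < 1)
    (r Γ : ℝ) (hr : r = (1 - ε) / (Δ + 1)) (hΓ : Γ = (1 - r) / (r * Δ)) :
    Real.log (1 + (Γ - 1) / (Γ * Δ + 1)) - r * Real.log Γ
      = rateF ε / (Δ + 1) + ((Δ : ℝ) / (Δ + 1)) * rateF (-ε / Δ) := by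
  set D : ℝ := (Δ : ℝ) with hD
  have hD1 : (1 : ℝ) ≤ D := by rw [hD]; exact_mod_cast hΔ
  have hDpos : 0 < D := lt_of_lt_of_le one_pos hD1
  have hD1pos : 0 < D + 1 := by linarith
  have h1ε : 0 < 1 - ε := by linarith
  have hDε : 0 < D + ε := by linarith
  have hΓval : Γ = (D + ε) / (D * (1 - ε)) := by
    rw [hΓ, hr]; field_simp; ring
  have hden : Γ * D + 1 = (D + 1) / (1 - ε) := by
    rw [hΓval]; field_simp; ring
  have h1 : 1 + (Γ - 1) / (Γ * D + 1) = (D + ε) / D := by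
    rw [hden, hΓval]; field_simp; ring
  have hΓpos : 0 < Γ := by rw [hΓval]; positivity
  have hnd : 1 - -ε / D = (D + ε) / D := by field_simp; ring
  have hlog1 : Real.log (1 + (Γ - 1) / (Γ * D + 1))
      = Real.log (D + ε) - Real.log D := by
    rw [h1, Real.log_div (ne_of_gt hDε) (ne_of_gt hDpos)]
  have hlogΓ : Real.log Γ
      = Real.log (D + ε) - Real.log D - Real.log (1 - ε) := by
    rw [hΓval, Real.log_div (ne_of_gt hDε) (by positivity),
      Real.log_mul (ne_of_gt hDpos) (ne_of_gt h1ε)]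
    ring
  rw [hlog1, hlogΓ, rateF, rateF, hnd,
    Real.log_div (ne_of_gt hDε) (ne_of_gt hDpos), hr]
  field_simp
  ring
end

section
/- Let Δ ≥ 1 be an integer and let ε be a real number with 0 < ε < 1. Set r = (1−ε)/(Δ+1) and Γ = (1−r)/(r·Δ). Then ln(1 + (Γ−1)/(Γ·Δ+1)) − r·ln Γ ≥ ε²/(2Δ). Consequently, (ln n)/(ln(1 + (Γ−1)/(Γ·Δ+1)) − r·ln Γ) ≤ 2·ε⁻²·Δ·ln n for every real n > 1. -/
open intervalIntegral

lemma poly_int (a b k : ℝ) :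
    ∫ t in a..b, (2 - t + (t-1)^2 * k)
      = (2*b - b^2/2 + (b-1)^3/3*k) - (2*a - a^2/2 + (a-1)^3/3*k) := by
  have h1 : ∫ t in a..b, (t-1)^2 = ((b-1)^3 - (a-1)^3)/3 := by
    have := integral_comp_sub_right (fun t : ℝ => t^2) 1 (a := a) (b := b)
    rw [this, integral_pow]
    norm_num
  have hi1 : IntervalIntegrable (fun t : ℝ => 2 - t) MeasureTheory.volume a b :=
    (continuous_const.sub continuous_id).intervalIntegrable a b
  have hi2 : IntervalIntegrable (fun t : ℝ => (t-1)^2 * k) MeasureTheory.volume a b := by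
    apply Continuous.intervalIntegrable; continuity
  rw [integral_add hi1 hi2, integral_mul_const, h1,
    integral_sub intervalIntegrable_const intervalIntegrable_id, integral_const, integral_id]
  simp
  ring

lemma K1 (x : ℝ) (hx : 0 ≤ x) : x - x^2/2 + x^3/(3*(1+x)) ≤ Real.log (1+x) := by
  have h1 : (0:ℝ) < 1 + x := by linarith
  have hlog : Real.log (1+x) = ∫ t in (1:ℝ)..(1+x), t⁻¹ := by
    rw [integral_inv_of_pos one_pos h1, div_one]
  have hmono : ∫ t in (1:ℝ)..(1+x), (2 - t + (t-1)^2 * (1+x)⁻¹) ≤ ∫ t in (1:ℝ)..(1+x), t⁻¹ := by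
    apply integral_mono_on (by linarith)
    · apply Continuous.intervalIntegrable; continuity
    · apply intervalIntegrable_inv
      · intro t ht; rw [Set.uIcc_of_le (by linarith)] at ht; nlinarith [ht.1]
      · exact continuousOn_id
    · intro t ht
      obtain ⟨ht1, ht2⟩ := ht
      have htpos : (0:ℝ) < t := by linarith
      have e1 : 2 - t + (t-1)^2 * t⁻¹ = t⁻¹ := by field_simp; ring
      have e2 : 2 - t + (t-1)^2 * (1+x)⁻¹ ≤ 2 - t + (t-1)^2 * t⁻¹ := by
        gcongr
      linarith [e2, e1.le, e1.ge]
  rw [hlog]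
  refine le_trans (le_of_eq ?_) hmono
  rw [poly_int]
  field_simp
  ring

lemma K2 (e : ℝ) (h0 : 0 ≤ e) (h1 : e < 1) :
    -(e + e^2/2 + e^3/(3*(1-e))) ≤ Real.log (1-e) := by
  have hp : (0:ℝ) < 1 - e := by linarith
  have hlog : Real.log (1-e) = - ∫ t in (1-e)..(1:ℝ), t⁻¹ := by
    rw [integral_inv_of_pos hp one_pos, ← Real.log_inv]
    rw [one_div]
    simp
  have hmono : ∫ t in (1-e)..(1:ℝ), t⁻¹ ≤ ∫ t in (1-e)..(1:ℝ), (2 - t + (t-1)^2 * (1-e)⁻¹) := by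
    apply integral_mono_on (by linarith)
    · apply intervalIntegrable_inv
      · intro t ht; rw [Set.uIcc_of_le (by linarith)] at ht; nlinarith [ht.1]
      · exact continuousOn_id
    · apply Continuous.intervalIntegrable; continuity
    · intro t ht
      obtain ⟨ht1, ht2⟩ := ht
      have htpos : (0:ℝ) < t := by linarith
      have e1 : 2 - t + (t-1)^2 * t⁻¹ = t⁻¹ := by field_simp; ring
      have e2 : 2 - t + (t-1)^2 * t⁻¹ ≤ 2 - t + (t-1)^2 * (1-e)⁻¹ := by
        gcongr
      linarith [e2, e1.le, e1.ge]
  rw [hlog]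
  have := hmono.trans (le_of_eq (poly_int (1-e) 1 (1-e)⁻¹))
  have key : (2*1 - 1^2/2 + (1-1)^3/3*(1-e)⁻¹) - (2*(1-e) - (1-e)^2/2 + ((1-e)-1)^3/3*(1-e)⁻¹)
      = e + e^2/2 + e^3/(3*(1-e)) := by
    field_simp
    ring
  linarith [this, key.le, key.ge]

theorem edge_rate_lower_bound (Δ : ℕ) (hΔ : 1 ≤ Δ) (ε : ℝ) (hε0 : 0 < ε) (hε1 : ε < 1)
    (r Γ : ℝ) (hr : r = (1 - ε) / (Δ + 1)) (hΓ : Γ = (1 - r) / (r * Δ)) :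
    ε ^ 2 / (2 * Δ) ≤ Real.log (1 + (Γ - 1) / (Γ * Δ + 1)) - r * Real.log Γ ∧
    ∀ n : ℝ, 1 < n →
      Real.log n / (Real.log (1 + (Γ - 1) / (Γ * Δ + 1)) - r * Real.log Γ)
        ≤ 2 * (ε ^ 2)⁻¹ * Δ * Real.log n := by
  set D : ℝ := (Δ : ℝ) with hD
  have hD1 : 1 ≤ D := Nat.one_le_cast.mpr hΔ
  have hD0 : 0 < D := by linarith
  have h1e : 0 < 1 - ε := by linarith
  have hr0 : 0 < r := by rw [hr]; positivity
  have hr1 : r < 1 := by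
    rw [hr, div_lt_one (by linarith)]; linarith
  have hΓv : Γ = (D + ε) / (D * (1 - ε)) := by
    rw [hΓ, hr]; field_simp; ring
  have hΓD1 : Γ * D + 1 = (D + 1) / (1 - ε) := by
    rw [hΓv]; field_simp; ring
  have hA : 1 + (Γ - 1) / (Γ * D + 1) = 1 + ε / D := by
    rw [hΓD1, hΓv]; field_simp; ring
  set x : ℝ := ε / D with hx
  have hx0 : 0 < x := by positivity
  have hlogΓ : Real.log Γ = Real.log (1 + x) - Real.log (1 - ε) := by
    have h1x : 1 + x = (D + ε) / D := by rw [hx]; field_simp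
    have : Γ = (1 + x) / (1 - ε) := by
      rw [h1x, hΓv, div_div]
    rw [this, Real.log_div (by positivity) (ne_of_gt h1e)]
  have h1 : x - x^2/2 + x^3/(3*(1+x)) ≤ Real.log (1+x) := K1 x hx0.le
  have h2 : -(ε + ε^2/2 + ε^3/(3*(1-ε))) ≤ Real.log (1-ε) := K2 ε hε0.le hε1
  have alg : ε^2/(2*D) + ε^3*(D^2-1)/(6*D^2*(D+1))
      = (1-r)*(x - x^2/2 + x^3/(3*(1+x))) + r*(-(ε + ε^2/2 + ε^3/(3*(1-ε)))) := by
    rw [hr, hx]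
    have h1x : (0:ℝ) < 1 + ε/D := by positivity
    field_simp
    ring
  have hmain : ε ^ 2 / (2 * D) ≤ Real.log (1 + (Γ - 1) / (Γ * D + 1)) - r * Real.log Γ := by
    rw [hA, hlogΓ]
    have hextra : 0 ≤ ε^3*(D^2-1)/(6*D^2*(D+1)) := by
      apply div_nonneg _ (by positivity)
      apply mul_nonneg (by positivity)
      nlinarith
    nlinarith [mul_le_mul_of_nonneg_left h1 (by linarith : (0:ℝ) ≤ 1 - r),
      mul_le_mul_of_nonneg_left h2 hr0.le]
  refine ⟨hmain, ?_⟩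
  intro n hn
  have hlogn : 0 < Real.log n := Real.log_pos hn
  have hden : 0 < ε ^ 2 / (2 * D) := by positivity
  have hLpos : 0 < Real.log (1 + (Γ - 1) / (Γ * D + 1)) - r * Real.log Γ := lt_of_lt_of_le hden hmain
  have step : Real.log n / (Real.log (1 + (Γ - 1) / (Γ * D + 1)) - r * Real.log Γ)
      ≤ Real.log n / (ε ^ 2 / (2 * D)) :=
    div_le_div_of_nonneg_left hlogn.le hden hmain
  have eq2 : Real.log n / (ε ^ 2 / (2 * D)) = 2 * (ε ^ 2)⁻¹ * D * Real.log n := by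
    field_simp
  exact step.trans (le_of_eq eq2)
end
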